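/- arXiv:2512.09166 — 7 statements merged into one kernel-verified Lean document; each statement's English description precedes it below -/
import Mathlib

section
/- If the Uniform Random Walk on a connected weighted graph G exists, i.e., the limits u_{xy} = lim_n A_{xy} W_{n-1}(y)/W_n(x) exist for all edges (x,y), then for any walk w = x_0 x_1 ⋯ x_k, the URW probability of w satisfies u(w)/a(w) = lim_n W_{n-k}(x_k)/W_n(x_0). In particular, for any two walks w_1, w_2 of the same length with the same start and end vertices, u(w_1)/a(w_1) = u(w_2)/a(w_2), so the URW is a Doob walk. -/
open Filter Topology

noncomputable def walkWeight {V : Type*} (A : V → V → ℝ) {n : ℕ} (w : Fin (n+1) → V) : ℝ :=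
  ∏ i : Fin n, A (w i.castSucc) (w i.succ)

def GraphWalk {V : Type*} (A : V → V → ℝ) (n : ℕ) (x : V) : Type _ :=
  {w : Fin (n+1) → V // w 0 = x ∧ ∀ i : Fin n, 0 < A (w i.castSucc) (w i.succ)}

/-- `W_n(x)`: the total weight of walks of length `n` starting at `x`. -/
noncomputable def walkCount {V : Type*} (A : V → V → ℝ) (n : ℕ) (x : V) : ℝ :=
  ∑' w : GraphWalk A n x, walkWeight A w.1

/-
Peeling off the last edge `(y, z)` of a walk of length `k + 1` factors the ratio
`W_{n-k-1}(z) / W_n(x_0)` as `(A_{yz} W_{n-k-1}(z) / W_{n-k}(y)) · (W_{n-k}(y) / W_n(x_0)) / A_{yz}`.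
The first factor tends to `u_{yz}` by the definition of the URW (shifted by `k`), the second
to `u(w')/a(w')` for the shortened walk `w'` by induction, so the limit is `u(w)/a(w)`.
Walks of the same length with the same endpoints give the same sequence of ratios, hence the
same limit.
-/

theorem walkWeight_succ {V : Type*} (f : V → V → ℝ) {k : ℕ} (w : Fin (k + 2) → V) :
    walkWeight f w =
      walkWeight f (Fin.init w) * f (w (Fin.last k).castSucc) (w (Fin.last (k + 1))) := by
  simp only [walkWeight, Fin.prod_univ_castSucc, Fin.init, Fin.succ_castSucc, Fin.succ_last]

theorem walkWeight_pos {V : Type*} {A : V → V → ℝ} {k : ℕ} {w : Fin (k + 1) → V}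
    (hw : ∀ i : Fin k, 0 < A (w i.castSucc) (w i.succ)) : 0 < walkWeight A w :=
  Finset.prod_pos fun i _ => hw i

theorem tendsto_ratio_walkWeight {V : Type*} (A u : V → V → ℝ) (W : ℕ → V → ℝ)
    (hW : ∀ n x, W n x ≠ 0)
    (hU : ∀ x y, 0 < A x y →
      Tendsto (fun n : ℕ => A x y * W (n - 1) y / W n x) atTop (𝓝 (u x y)))
    (k : ℕ) (w : Fin (k + 1) → V) (hw : ∀ i : Fin k, 0 < A (w i.castSucc) (w i.succ)) :
    Tendsto (fun n : ℕ => W (n - k) (w (Fin.last k)) / W n (w 0))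
      atTop (𝓝 (walkWeight u w / walkWeight A w)) := by
  induction k with
  | zero =>
    have hconst : (fun n : ℕ => W (n - 0) (w (Fin.last 0)) / W n (w 0)) = fun _ => 1 :=
      funext fun n => div_self (hW n (w 0))
    rw [hconst]
    simp [walkWeight]
  | succ k ih =>
    set y := w (Fin.last k).castSucc
    set z := w (Fin.last (k + 1))
    have hyz : 0 < A y z := by simpa [Fin.succ_last] using hw (Fin.last k)
    have hinit : ∀ i : Fin k, 0 < A (Fin.init w i.castSucc) (Fin.init w i.succ) := fun i => by
      simpa only [Fin.init, Fin.succ_castSucc] using hw i.castSucc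
    have hlastEdge : Tendsto (fun n : ℕ => A y z * W (n - k - 1) z / W (n - k) y)
        atTop (𝓝 (u y z)) :=
      (hU y z hyz).comp (tendsto_sub_atTop_nat k)
    have hseq : (fun n : ℕ => W (n - (k + 1)) z / W n (w 0)) = fun n : ℕ =>
        A y z * W (n - k - 1) z / W (n - k) y * (W (n - k) y / W n (w 0)) / A y z := by
      funext n
      have hk : n - (k + 1) = n - k - 1 := by omega
      have := hW (n - k) y
      have := hW n (w 0)
      rw [hk]
      field_simp
    have hlim : u y z * (walkWeight u (Fin.init w) / walkWeight A (Fin.init w)) / A y z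
        = walkWeight u w / walkWeight A w := by
      have := (walkWeight_pos hinit).ne'
      have := hyz.ne'
      rw [show walkWeight u w = _ * u y z from walkWeight_succ u w,
        show walkWeight A w = _ * A y z from walkWeight_succ A w]
      field_simp
    rw [hseq, ← hlim]
    exact (hlastEdge.mul (ih (Fin.init w) hinit)).div_const (A y z)

theorem urw_is_doob_walk_general
    {V : Type*} (A : V → V → ℝ)
    (hWpos : ∀ (n : ℕ) (x : V), 0 < walkCount A n x)
    (u : V → V → ℝ)
    (hU : ∀ x y, 0 < A x y →
      Tendsto (fun n : ℕ => A x y * walkCount A (n-1) y / walkCount A n x)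
        atTop (𝓝 (u x y))) :
    (∀ (k : ℕ) (x : V) (w : GraphWalk A k x),
      Tendsto (fun n : ℕ => walkCount A (n-k) (w.1 (Fin.last k)) / walkCount A n x)
        atTop (𝓝 (walkWeight u w.1 / walkWeight A w.1))) ∧
    (∀ (k : ℕ) (x : V) (w₁ w₂ : GraphWalk A k x),
      w₁.1 (Fin.last k) = w₂.1 (Fin.last k) →
      walkWeight u w₁.1 / walkWeight A w₁.1 = walkWeight u w₂.1 / walkWeight A w₂.1) := by
  have hlimit : ∀ (k : ℕ) (x : V) (w : GraphWalk A k x),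
      Tendsto (fun n : ℕ => walkCount A (n-k) (w.1 (Fin.last k)) / walkCount A n x)
        atTop (𝓝 (walkWeight u w.1 / walkWeight A w.1)) := by
    rintro k x ⟨w, rfl, hw⟩
    exact tendsto_ratio_walkWeight A u (walkCount A) (fun n x => (hWpos n x).ne') hU k w hw
  refine ⟨hlimit, fun k x w₁ w₂ hlast => ?_⟩
  have h₁ := hlimit k x w₁
  rw [hlast] at h₁
  exact tendsto_nhds_unique h₁ (hlimit k x w₂)

/-- if the Uniform Random Walk exists on a connected weighted graph `G`,
i.e. `u_{xy} = lim_n A_{xy} W_{n-1}(y)/W_n(x)` exists for all edges `(x,y)`, then for any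
walk `w = x_0 x_1 ⋯ x_k` one has `u(w)/a(w) = lim_n W_{n-k}(x_k)/W_n(x_0)`; in particular,
for two walks of the same length with the same start and end points,
`u(w_1)/a(w_1) = u(w_2)/a(w_2)`, i.e. the URW is a Doob walk. -/
theorem urw_is_doob_walk
    {V : Type*} (A : V → V → ℝ)
    (hAsymm : ∀ x y, A x y = A y x)
    (hAnn : ∀ x y, 0 ≤ A x y)
    (hloc : ∀ x, (Function.support (A x)).Finite)
    (hconn : ∀ x y : V, ∃ (k : ℕ) (w : GraphWalk A k x), w.1 (Fin.last k) = y)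
    (hWpos : ∀ (n : ℕ) (x : V), 0 < walkCount A n x)
    (u : V → V → ℝ)
    (hU : ∀ x y, 0 < A x y →
      Tendsto (fun n : ℕ => A x y * walkCount A (n-1) y / walkCount A n x)
        atTop (𝓝 (u x y))) :
    (∀ (k : ℕ) (x : V) (w : GraphWalk A k x),
      Tendsto (fun n : ℕ => walkCount A (n-k) (w.1 (Fin.last k)) / walkCount A n x)
        atTop (𝓝 (walkWeight u w.1 / walkWeight A w.1))) ∧
    (∀ (k : ℕ) (x : V) (w₁ w₂ : GraphWalk A k x),
      w₁.1 (Fin.last k) = w₂.1 (Fin.last k) →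
      walkWeight u w₁.1 / walkWeight A w₁.1 = walkWeight u w₂.1 / walkWeight A w₂.1) :=
  urw_is_doob_walk_general A hWpos u hU
end

section
/- For a Doob walk P on a connected weighted graph G, the quantity √(A_{xy}A_{yx}/(p_{xy}p_{yx})) is the same for all edges (x,y) of G (this common value is called the energy of the Doob walk). -/
/-- for a Doob walk `P` on a connected weighted graph `G` (a Markov kernel
supported on the edges such that `p(w₁)/a(w₁) = p(w₂)/a(w₂)` for any two walks of the same
length with the same endpoints), the quantity `√(A_{xy}A_{yx}/(p_{xy}p_{yx}))` is the same
for all edges `(x,y)` — the energy of the Doob walk. -/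
theorem doob_walk_energy_constant
    {V : Type*} (A P : V → V → ℝ)
    (hAsymm : ∀ x y, A x y = A y x)
    (hAnn : ∀ x y, 0 ≤ A x y)
    (hPnn : ∀ x y, 0 ≤ P x y)
    (hsupp : ∀ x y, 0 < P x y ↔ 0 < A x y)
    (hrow : ∀ x, ∑' y, P x y = 1)
    (hconn : ∀ x y : V, ∃ (k : ℕ) (w : GraphWalk A k x), w.1 (Fin.last k) = y)
    (hDoob : ∀ (k : ℕ) (x : V) (w₁ w₂ : GraphWalk A k x),
      w₁.1 (Fin.last k) = w₂.1 (Fin.last k) →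
      walkWeight P w₁.1 / walkWeight A w₁.1 = walkWeight P w₂.1 / walkWeight A w₂.1) :
    ∀ x y x' y' : V, 0 < A x y → 0 < A x' y' →
      Real.sqrt (A x y * A y x / (P x y * P y x))
        = Real.sqrt (A x' y' * A y' x' / (P x' y' * P y' x')) := by
  set Q : V → V → ℝ := fun a b => P a b * P b a / (A a b * A b a) with hQ
  have Qsymm : ∀ a b, Q a b = Q b a := by
    intro a b; simp only [hQ]; rw [mul_comm (P a b), mul_comm (A a b)]
  -- key lemma: two edges at the same vertex have the same Q
  have key : ∀ a b c : V, 0 < A a b → 0 < A a c → Q a b = Q a c := by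
    intro a b c hab hac
    have hba : 0 < A b a := by rw [← hAsymm]; exact hab
    have hca : 0 < A c a := by rw [← hAsymm]; exact hac
    have pf1 : ∀ i : Fin 2, 0 < A (![a,b,a] i.castSucc) (![a,b,a] i.succ) := by
      intro i; fin_cases i <;> simpa using (by assumption : _)
    have pf2 : ∀ i : Fin 2, 0 < A (![a,c,a] i.castSucc) (![a,c,a] i.succ) := by
      intro i; fin_cases i <;> simpa using (by assumption : _)
    have h := hDoob 2 a ⟨![a,b,a], rfl, pf1⟩ ⟨![a,c,a], rfl, pf2⟩ rfl
    simpa [walkWeight, Fin.prod_univ_two, hQ] using h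
  -- along a walk, Q at the starting edge equals Q at the ending edge
  have walkQ : ∀ (k : ℕ) (x x' y y' : V) (w : GraphWalk A k x),
      w.1 (Fin.last k) = x' → 0 < A x y → 0 < A x' y' → Q x y = Q x' y' := by
    intro k
    induction k with
    | zero =>
      intro x x' y y' w hend hxy hx'y'
      have hx : x = x' := by rw [← w.2.1, ← hend]; rfl
      subst hx
      exact key _ _ _ hxy hx'y'
    | succ k ih =>
      intro x x' y y' w hend hxy hx'y'
      set z := w.1 1 with hz
      have hxz : 0 < A x z := by
        have h0 := w.2.2 0
        rw [show ((0 : Fin (k+1)).castSucc) = 0 from rfl, w.2.1] at h0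
        exact h0
      have hzx : 0 < A z x := by rw [← hAsymm]; exact hxz
      have pft : ∀ i : Fin k, 0 < A (w.1 i.castSucc.succ) (w.1 i.succ.succ) := by
        intro i
        have h := w.2.2 i.succ
        have e : (i.succ : Fin (k+1)).castSucc = (i.castSucc).succ := by
          ext; simp
        rw [e] at h
        exact h
      have htend : w.1 (Fin.last k).succ = x' := by
        have : (Fin.last k).succ = Fin.last (k+1) := rfl
        rw [this, hend]
      calc Q x y = Q x z := key _ _ _ hxy hxz
        _ = Q z x := Qsymm _ _
        _ = Q x' y' := ih z x' x y' ⟨fun i => w.1 i.succ, rfl, pft⟩ htend hzx hx'y'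
  intro x y x' y' hxy hx'y'
  obtain ⟨k, w, hw⟩ := hconn x x'
  have hQeq : Q x y = Q x' y' := walkQ k x x' y y' w hw hxy hx'y'
  have h1 : A x y * A y x / (P x y * P y x) = (Q x y)⁻¹ := by
    simp [hQ, inv_div]
  have h2 : A x' y' * A y' x' / (P x' y' * P y' x') = (Q x' y')⁻¹ := by
    simp [hQ, inv_div]
  rw [h1, h2, hQeq]
end

section
/- Let G be a d-regular graph with a loop of weight σ at vertex o, with operator H = A + σ 1_o 1_o*. The exponential walk growth ρ_σ = lim_n (W_n^σ(x))^{1/n} exists for every x and equals max{d, r_σ}, where r_σ = ||H|| is the ℓ²-operator norm of H. -/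
open Filter Topology Classical

open Classical in
noncomputable def matPow {V : Type*} (M : V → V → ℝ) : ℕ → V → V → ℝ
  | 0 => fun x y => if x = y then 1 else 0
  | n+1 => fun x y => ∑' z, M x z * matPow M n z y

noncomputable def walkTotal {V : Type*} (M : V → V → ℝ) (n : ℕ) (x : V) : ℝ :=
  ∑' y, matPow M n x y

namespace LoopWalkAux

open Function

variable {V : Type*}

lemma summable_of_support_finite {f : V → ℝ} (h : (Function.support f).Finite) : Summable f := by
  apply summable_of_ne_finset_zero (s := h.toFinset)
  intro b hb
  by_contra hfb
  exact hb (h.mem_toFinset.2 hfb)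

lemma matPow_zero (M : V → V → ℝ) (x y : V) : matPow M 0 x y = if x = y then 1 else 0 := rfl

lemma matPow_succ (M : V → V → ℝ) (n : ℕ) (x y : V) :
    matPow M (n+1) x y = ∑' z, M x z * matPow M n z y := rfl

lemma matPow_support {M : V → V → ℝ} (hM : ∀ x, (support (M x)).Finite) :
    ∀ (n : ℕ) (x : V), (support (matPow M n x)).Finite
  | 0, x => by
    refine (Set.finite_singleton x).subset fun y hy => ?_
    simp only [mem_support, matPow_zero] at hy
    by_contra h
    exact hy (if_neg (fun hxy => h (by simp [hxy])))
  | n+1, x => by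
    refine ((hM x).biUnion (fun z _ => matPow_support hM n z)).subset fun y hy => ?_
    simp only [mem_support, matPow_succ] at hy
    by_contra hnot
    apply hy
    have : ∀ z, M x z * matPow M n z y = 0 := by
      intro z
      by_cases hz : M x z = 0
      · simp [hz]
      · have hmem : y ∉ support (matPow M n z) := fun hmem => hnot (Set.mem_biUnion hz hmem)
        simp only [mem_support, not_not] at hmem
        simp [hmem]
    simp [this]

lemma matPow_nonneg {M : V → V → ℝ} (hM : ∀ x y, 0 ≤ M x y) :
    ∀ (n : ℕ) (x y : V), 0 ≤ matPow M n x y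
  | 0, x, y => by rw [matPow_zero]; split <;> norm_num
  | n+1, x, y => by
    rw [matPow_succ]
    exact tsum_nonneg fun z => mul_nonneg (hM x z) (matPow_nonneg hM n z y)

lemma matPow_summable {M : V → V → ℝ} (hM : ∀ x, (support (M x)).Finite) (n : ℕ) (x : V) :
    Summable (matPow M n x) :=
  summable_of_support_finite (matPow_support hM n x)

lemma matPow_one (M : V → V → ℝ) (x y : V) : matPow M 1 x y = M x y := by
  rw [matPow_succ, tsum_eq_single y]
  · simp [matPow_zero]
  · intro z hz
    rw [matPow_zero, if_neg hz, mul_zero]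

lemma matPow_add {M : V → V → ℝ} (hM : ∀ x, (support (M x)).Finite) (m n : ℕ) (x y : V) :
    matPow M (m + n) x y = ∑' z, matPow M m x z * matPow M n z y := by
  induction m generalizing x with
  | zero =>
    rw [Nat.zero_add, tsum_eq_single x]
    · simp [matPow_zero]
    · intro z hz
      rw [matPow_zero, if_neg (fun h => hz h.symm), zero_mul]
  | succ m ih =>
    have e : m + 1 + n = (m + n) + 1 := by omega
    rw [e, matPow_succ]
    have step1 : ∀ z, M x z * matPow M (m+n) z y
        = ∑' w, M x z * (matPow M m z w * matPow M n w y) := by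
      intro z; rw [ih z, ← tsum_mul_left]
    have hsum : Summable (Function.uncurry
        (fun z w => M x z * (matPow M m z w * matPow M n w y))) := by
      apply summable_of_support_finite
      refine Set.Finite.subset ((hM x).prod ((hM x).biUnion
        (fun z _ => matPow_support hM m z))) ?_
      rintro ⟨z, w⟩ hp
      simp only [mem_support, Function.uncurry] at hp
      have hz : M x z ≠ 0 := fun h => hp (by simp [h])
      have hw : matPow M m z w ≠ 0 := fun h => hp (by simp [h])
      exact Set.mem_prod.2 ⟨hz, Set.mem_biUnion hz hw⟩
    calc ∑' z, M x z * matPow M (m + n) z y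
        = ∑' z, ∑' w, M x z * (matPow M m z w * matPow M n w y) := tsum_congr step1
      _ = ∑' w, ∑' z, M x z * (matPow M m z w * matPow M n w y) := (Summable.tsum_comm hsum).symm
      _ = ∑' w, matPow M (m+1) x w * matPow M n w y := by
          refine tsum_congr fun w => ?_
          rw [matPow_succ, ← tsum_mul_right]
          exact tsum_congr fun z => (mul_assoc _ _ _).symm

lemma matPow_symm {M : V → V → ℝ} (hM : ∀ x, (support (M x)).Finite)
    (hsym : ∀ x y, M x y = M y x) : ∀ (n : ℕ) (x y : V), matPow M n x y = matPow M n y x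
  | 0, x, y => by
    rw [matPow_zero, matPow_zero]
    by_cases h : x = y
    · simp [h]
    · rw [if_neg h, if_neg (fun hh : y = x => h hh.symm)]
  | n+1, x, y => by
    rw [matPow_succ, matPow_add hM n 1 y x]
    exact tsum_congr fun z => by
      rw [matPow_one, matPow_symm hM hsym n z y, hsym x z, mul_comm]

lemma matPow_mono {M M' : V → V → ℝ} (hM : ∀ x y, 0 ≤ M x y) (hle : ∀ x y, M x y ≤ M' x y)
    (hM' : ∀ x, (support (M' x)).Finite) :
    ∀ (n : ℕ) (x y : V), matPow M n x y ≤ matPow M' n x y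
  | 0, x, y => by rw [matPow_zero, matPow_zero]
  | n+1, x, y => by
    have hMfin : ∀ x, (support (M x)).Finite := by
      intro a
      refine (hM' a).subset fun z hz => ?_
      simp only [mem_support] at *
      intro h
      exact hz (le_antisymm (h ▸ hle a z) (hM a z))
    rw [matPow_succ, matPow_succ]
    refine Summable.tsum_le_tsum (fun z => ?_) ?_ ?_
    · exact mul_le_mul (hle x z) (matPow_mono hM hle hM' n z y)
        (matPow_nonneg hM n z y) (le_trans (hM x z) (hle x z))
    · apply summable_of_support_finite
      refine (hMfin x).subset fun z hz => ?_
      simp only [mem_support] at *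
      exact fun h => hz (by simp [h])
    · apply summable_of_support_finite
      refine (hM' x).subset fun z hz => ?_
      simp only [mem_support] at *
      exact fun h => hz (by simp [h])

lemma walkTotal_zero (M : V → V → ℝ) (x : V) : walkTotal M 0 x = 1 := by
  rw [walkTotal, tsum_eq_single x]
  · simp [matPow_zero]
  · intro z hz
    rw [matPow_zero, if_neg (fun h => hz h.symm)]

lemma walkTotal_succ {M : V → V → ℝ} (hM : ∀ x, (support (M x)).Finite)
    {d σ : ℝ} {o : V} (hrow : ∀ z, ∑' y, M z y = d + if z = o then σ else 0)
    (n : ℕ) (x : V) :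
    walkTotal M (n+1) x = d * walkTotal M n x + σ * matPow M n x o := by
  have hrw : ∀ y, matPow M (n+1) x y = ∑' z, matPow M n x z * M z y := by
    intro y
    have h := matPow_add hM n 1 x y
    simpa only [matPow_one] using h
  have hsum : Summable (Function.uncurry (fun z y => matPow M n x z * M z y)) := by
    apply summable_of_support_finite
    refine Set.Finite.subset ((matPow_support hM n x).prod
      ((matPow_support hM n x).biUnion (fun z _ => hM z))) ?_
    rintro ⟨z, w⟩ hp
    simp only [mem_support, Function.uncurry] at hp
    have hz : matPow M n x z ≠ 0 := fun h => hp (by simp [h])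
    have hw : M z w ≠ 0 := fun h => hp (by simp [h])
    exact Set.mem_prod.2 ⟨hz, Set.mem_biUnion hz hw⟩
  have s1 : Summable (fun z => matPow M n x z * d) := by
    apply summable_of_support_finite
    refine (matPow_support hM n x).subset fun z hz => ?_
    simp only [mem_support] at *
    exact fun h => hz (by simp [h])
  have s2 : Summable (fun z => if z = o then matPow M n x z * σ else 0) := by
    apply summable_of_support_finite
    refine (Set.finite_singleton o).subset fun z hz => ?_
    simp only [mem_support] at hz
    by_contra h
    exact hz (if_neg h)
  calc walkTotal M (n+1) x
      = ∑' y, ∑' z, matPow M n x z * M z y := tsum_congr hrw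
    _ = ∑' z, ∑' y, matPow M n x z * M z y := Summable.tsum_comm hsum
    _ = ∑' z, matPow M n x z * (d + if z = o then σ else 0) := by
        refine tsum_congr fun z => ?_
        rw [tsum_mul_left, hrow z]
    _ = ∑' z, (matPow M n x z * d + if z = o then matPow M n x z * σ else 0) := by
        refine tsum_congr fun z => ?_
        by_cases hz : z = o <;> simp [hz, mul_add]
    _ = (∑' z, matPow M n x z * d) + ∑' z, (if z = o then matPow M n x z * σ else 0) :=
        Summable.tsum_add s1 s2
    _ = d * walkTotal M n x + σ * matPow M n x o := by
        rw [tsum_mul_right, tsum_eq_single o (fun z hz => if_neg hz), if_pos rfl, walkTotal]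
        ring

lemma walkTotal_closed {M : V → V → ℝ} (hM : ∀ x, (support (M x)).Finite)
    {d σ : ℝ} {o : V} (hrow : ∀ z, ∑' y, M z y = d + if z = o then σ else 0) :
    ∀ (n : ℕ) (x : V), walkTotal M n x
      = d^n + σ * ∑ k ∈ Finset.range n, d^(n-1-k) * matPow M k x o
  | 0, x => by simp [walkTotal_zero]
  | n+1, x => by
    rw [walkTotal_succ hM hrow, walkTotal_closed hM hrow n x, Finset.sum_range_succ]
    have h0 : n + 1 - 1 - n = 0 := by omega
    have hcong : ∀ k ∈ Finset.range n, d^(n+1-1-k) * matPow M k x o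
        = d * (d^(n-1-k) * matPow M k x o) := by
      intro k hk
      simp only [Finset.mem_range] at hk
      have he : n + 1 - 1 - k = (n - 1 - k) + 1 := by omega
      rw [he, pow_succ]
      ring
    rw [Finset.sum_congr rfl hcong, h0, pow_zero, ← Finset.mul_sum]
    ring

end LoopWalkAux

/-- for a `d`-regular graph with a loop of weight `σ ≥ 0` at `o`
(`H = A + σ 1_o 1_o*`), the exponential walk growth `ρ_σ = lim_n (W_n^σ(x))^{1/n}`
exists for every `x` and equals `max {d, r_σ}`, where `r_σ = ‖H‖` is the
ℓ²-spectral radius of `H`, identified via the Gelfand-type formula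
`r_σ = lim_n ((H^{2n})_{oo})^{1/(2n)}`. -/
theorem loop_perturbed_walk_growth

    {V : Type*} (A : V → V → ℝ) (d : ℝ) (hd : 0 < d)
    (hAsymm : ∀ x y, A x y = A y x)
    (hAnn : ∀ x y, 0 ≤ A x y)
    (hloc : ∀ x, (Function.support (A x)).Finite)
    (hreg : ∀ x, ∑' y, A x y = d)
    (hconn : ∀ x y : V, ∃ n : ℕ, 0 < matPow A n x y)
    (o : V) (σ : ℝ) (hσ : 0 ≤ σ)
    (H : V → V → ℝ)
    (hH : H = fun x y => A x y + if x = o ∧ y = o then σ else 0)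
    (r : ℝ) (hr0 : 0 ≤ r)
    (hr : Tendsto (fun n : ℕ => (matPow H (2*n) o o) ^ (((2*n : ℕ) : ℝ))⁻¹)
      atTop (𝓝 r)) :
    ∀ x : V, Tendsto (fun n : ℕ => (walkTotal H n x) ^ ((n : ℝ))⁻¹)
      atTop (𝓝 (max d r)) := by
  intro x
  have hd0 : (0:ℝ) ≤ d := le_of_lt hd
  -- basic facts about H
  have hHnn : ∀ a b, 0 ≤ H a b := by
    intro a b; rw [hH]; dsimp only
    have h2 : (0:ℝ) ≤ if a = o ∧ b = o then σ else 0 := by split <;> simp [hσ]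
    exact add_nonneg (hAnn a b) h2
  have hHsym : ∀ a b, H a b = H b a := by
    intro a b; rw [hH]; dsimp only
    rw [hAsymm a b]
    congr 1
    by_cases h1 : a = o <;> by_cases h2 : b = o <;> simp [h1, h2]
  have hHfin : ∀ a, (Function.support (H a)).Finite := by
    intro a
    refine ((hloc a).union (Set.finite_singleton o)).subset fun y hy => ?_
    simp only [Function.mem_support, hH] at hy
    by_cases hA : A a y = 0
    · by_cases hyo : y = o
      · exact Or.inr hyo
      · exact absurd (by simp [hA, hyo]) hy
    · exact Or.inl hA
  have hAleH : ∀ a b, A a b ≤ H a b := by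
    intro a b; rw [hH]; dsimp only
    have h2 : (0:ℝ) ≤ if a = o ∧ b = o then σ else 0 := by split <;> simp [hσ]
    linarith
  have hHrow : ∀ z, ∑' y, H z y = d + if z = o then σ else 0 := by
    intro z
    rw [hH]; dsimp only
    have s1 : Summable (A z) := LoopWalkAux.summable_of_support_finite (hloc z)
    have s2 : Summable (fun y => if z = o ∧ y = o then σ else 0) := by
      apply LoopWalkAux.summable_of_support_finite
      refine (Set.finite_singleton o).subset fun y hy => ?_
      simp only [Function.mem_support] at hy
      by_contra h
      exact hy (if_neg (fun hc => h hc.2))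
    rw [Summable.tsum_add s1 s2, hreg z]
    congr 1
    by_cases hz : z = o
    · rw [if_pos hz, tsum_eq_single o]
      · rw [if_pos ⟨hz, rfl⟩]
      · intro y hy
        exact if_neg (fun hc => hy hc.2)
    · simp [hz]
  have hPnn : ∀ (n : ℕ) (a b : V), 0 ≤ matPow H n a b := LoopWalkAux.matPow_nonneg hHnn
  have hkey : ∀ (n : ℕ) (x' : V), walkTotal H n x'
      = d^n + σ * ∑ k ∈ Finset.range n, d^(n-1-k) * matPow H k x' o :=
    LoopWalkAux.walkTotal_closed hHfin hHrow
  have hSnn : ∀ (n : ℕ) (x' : V),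
      0 ≤ ∑ k ∈ Finset.range n, d^(n-1-k) * matPow H k x' o :=
    fun n x' => Finset.sum_nonneg fun k _ => mul_nonneg (pow_nonneg hd0 _) (hPnn k x' o)
  have hWged : ∀ (n : ℕ) (x' : V), d^n ≤ walkTotal H n x' := by
    intro n x'; rw [hkey]
    nlinarith [hSnn n x', hσ]
  have hWnn : ∀ (n : ℕ) (x' : V), 0 ≤ walkTotal H n x' :=
    fun n x' => le_trans (pow_nonneg hd0 n) (hWged n x')
  have hterm : ∀ (k n : ℕ) (x' : V), k < n →
      σ * (d^(n-1-k) * matPow H k x' o) ≤ walkTotal H n x' := by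
    intro k n x' hkn
    rw [hkey]
    have h1 : d^(n-1-k) * matPow H k x' o
        ≤ ∑ i ∈ Finset.range n, d^(n-1-i) * matPow H i x' o :=
      Finset.single_le_sum (f := fun i => d^(n-1-i) * matPow H i x' o)
        (fun i _ => mul_nonneg (pow_nonneg hd0 _) (hPnn i x' o)) (Finset.mem_range.2 hkn)
    nlinarith [pow_nonneg hd0 n, mul_le_mul_of_nonneg_left h1 hσ]
  have hdiag_le : ∀ n : ℕ, matPow H n o o ≤ walkTotal H n o := fun n =>
    Summable.le_tsum (LoopWalkAux.matPow_summable hHfin n o) o (fun y _ => hPnn n o y)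
  have hsq : ∀ (k : ℕ) (x' : V), (matPow H k x' o)^2 ≤ matPow H (2*k) o o := by
    intro k x'
    rw [two_mul, LoopWalkAux.matPow_add hHfin k k o o]
    have hsummable : Summable (fun z => matPow H k o z * matPow H k z o) := by
      apply LoopWalkAux.summable_of_support_finite
      refine (LoopWalkAux.matPow_support hHfin k o).subset fun z hz => ?_
      simp only [Function.mem_support] at *
      exact fun h => hz (by simp [h])
    have h1 := Summable.le_tsum hsummable x' (fun z _ => mul_nonneg (hPnn k o z) (hPnn k z o))
    calc (matPow H k x' o)^2 = matPow H k o x' * matPow H k x' o := by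
          rw [LoopWalkAux.matPow_symm hHfin hHsym k o x']; ring
      _ ≤ _ := h1
  have hlow : ∀ (a b : ℕ) (x' : V),
      matPow H a x' o * matPow H b o o ≤ matPow H (a+b) x' o := by
    intro a b x'
    rw [LoopWalkAux.matPow_add hHfin a b x' o]
    refine Summable.le_tsum ?_ o (fun z _ => mul_nonneg (hPnn a x' z) (hPnn b z o))
    apply LoopWalkAux.summable_of_support_finite
    refine (LoopWalkAux.matPow_support hHfin a x').subset fun z hz => ?_
    simp only [Function.mem_support] at *
    exact fun h => hz (by simp [h])
  refine tendsto_order.2 ⟨fun b hb => ?_, fun b hb => ?_⟩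
  · -- LOWER bound
    by_cases hbd : b < d
    · filter_upwards [eventually_ge_atTop 1] with n hn
      calc b < d := hbd
        _ = (d^n) ^ ((n:ℝ))⁻¹ := (Real.pow_rpow_inv_natCast hd0 (by omega)).symm
        _ ≤ (walkTotal H n x) ^ ((n:ℝ))⁻¹ :=
          Real.rpow_le_rpow (pow_nonneg hd0 n) (hWged n x) (by positivity)
    · push_neg at hbd
      have hbr : b < r := (lt_max_iff.1 hb).resolve_left (not_lt.2 hbd)
      have hb0 : 0 < b := lt_of_lt_of_le hd hbd
      have hσpos : 0 < σ := by
        rcases lt_or_eq_of_le hσ with h | h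
        · exact h
        · exfalso
          have hW : ∀ k : ℕ, walkTotal H k o = d^k := by
            intro k; rw [hkey, ← h]; ring
          have hrle : r ≤ d := by
            refine le_of_tendsto hr ?_
            filter_upwards [eventually_ge_atTop 1] with k hk
            have hle1 : matPow H (2*k) o o ≤ d^(2*k) := by
              have h2 := hdiag_le (2*k); rwa [hW] at h2
            calc (matPow H (2*k) o o) ^ (((2*k : ℕ):ℝ))⁻¹
                ≤ (d^(2*k)) ^ (((2*k : ℕ):ℝ))⁻¹ :=
                  Real.rpow_le_rpow (hPnn _ o o) hle1 (by positivity)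
              _ = d := Real.pow_rpow_inv_natCast hd0 (by omega)
          linarith
      obtain ⟨m, hm⟩ := hconn x o
      have hc' : 0 < matPow H m x o :=
        lt_of_lt_of_le hm (LoopWalkAux.matPow_mono hAnn hAleH hHfin m x o)
      set c' := matPow H m x o with hc'def
      set t : ℝ := (b + r)/2 with htdef
      have hbt : b < t := by rw [htdef]; linarith
      have htr : t < r := by rw [htdef]; linarith
      have ht0 : 0 < t := lt_trans hb0 hbt
      set t' : ℝ := (b + t)/2 with ht'def
      have hbt' : b < t' := by rw [ht'def]; linarith
      have ht't : t' < t := by rw [ht'def]; linarith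
      have ht'0 : 0 < t' := lt_trans hb0 hbt'
      have hev : ∀ᶠ j : ℕ in atTop, t < (matPow H (2*j) o o) ^ (((2*j : ℕ):ℝ))⁻¹ :=
        hr.eventually_const_lt htr
      obtain ⟨J0, hJ0⟩ := eventually_atTop.1 hev
      set J := max J0 1 with hJdef
      have hdiag_ge : ∀ j : ℕ, J ≤ j → t^(2*j) ≤ matPow H (2*j) o o := by
        intro j hj
        have hj1 : 1 ≤ j := le_trans (le_max_right _ _) hj
        have hroot := hJ0 j (le_trans (le_max_left _ _) hj)
        calc t^(2*j) ≤ ((matPow H (2*j) o o) ^ (((2*j : ℕ):ℝ))⁻¹)^(2*j) :=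
              pow_le_pow_left₀ (le_of_lt ht0) (le_of_lt hroot) _
          _ = matPow H (2*j) o o :=
              Real.rpow_inv_natCast_pow (hPnn (2*j) o o) (by omega)
      set T : ℝ := (max 1 t)^(m+2) with hTdef
      have hT0 : 0 < T := pow_pos (lt_of_lt_of_le one_pos (le_max_left 1 t)) _
      set K : ℝ := σ * (min 1 d * (c' / T)) with hKdef
      have hK0 : 0 < K :=
        mul_pos hσpos (mul_pos (lt_min one_pos hd) (div_pos hc' hT0))
      have hmain : ∀ n : ℕ, m + 2*J + 1 ≤ n → K * t^n ≤ walkTotal H n x := by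
        intro n hn
        set j := (n - 1 - m)/2 with hjdef
        have hj : J ≤ j := by omega
        have hj1 : 1 ≤ J := le_max_right _ _
        set k := m + 2*j with hkdef
        have hkn : k < n := by omega
        have he : n - 1 - k = 0 ∨ n - 1 - k = 1 := by omega
        have h1 : c' * t^(2*j) ≤ matPow H k x o := by
          calc c' * t^(2*j) ≤ c' * matPow H (2*j) o o :=
                mul_le_mul_of_nonneg_left (hdiag_ge j hj) (le_of_lt hc')
            _ ≤ matPow H (m + 2*j) x o := hlow m (2*j) x
        have hdmin : min 1 d ≤ d^(n-1-k) := by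
          rcases he with h | h <;> rw [h]
          · rw [pow_zero]; exact min_le_left _ _
          · rw [pow_one]; exact min_le_right _ _
        have hsplit : t^(2*j) * t^(m + 1 + (n-1-k)) = t^n := by
          rw [← pow_add]; congr 1; omega
        have hTle : t^(m+1+(n-1-k)) ≤ T := by
          calc t^(m+1+(n-1-k)) ≤ (max 1 t)^(m+1+(n-1-k)) :=
                pow_le_pow_left₀ (le_of_lt ht0) (le_max_right 1 t) _
            _ ≤ (max 1 t)^(m+2) := pow_le_pow_right₀ (le_max_left 1 t) (by omega)
        have ht2j : t^n / T ≤ t^(2*j) := by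
          rw [div_le_iff₀ hT0]
          calc t^n = t^(2*j) * t^(m+1+(n-1-k)) := hsplit.symm
            _ ≤ t^(2*j) * T :=
                mul_le_mul_of_nonneg_left hTle (pow_nonneg (le_of_lt ht0) _)
        calc K * t^n = σ * (min 1 d * (c' * (t^n / T))) := by rw [hKdef]; ring
          _ ≤ σ * (d^(n-1-k) * (c' * t^(2*j))) := by
              refine mul_le_mul_of_nonneg_left ?_ hσ
              refine mul_le_mul hdmin
                (mul_le_mul_of_nonneg_left ht2j (le_of_lt hc'))
                (mul_nonneg (le_of_lt hc')
                  (div_nonneg (pow_nonneg (le_of_lt ht0) n) (le_of_lt hT0)))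
                (pow_nonneg hd0 _)
          _ ≤ σ * (d^(n-1-k) * matPow H k x o) := by
              refine mul_le_mul_of_nonneg_left ?_ hσ
              exact mul_le_mul_of_nonneg_left h1 (pow_nonneg hd0 _)
          _ ≤ walkTotal H n x := hterm k n x hkn
      have hratio : (1:ℝ) < t / t' := (one_lt_div ht'0).2 ht't
      have hgrow := (tendsto_pow_atTop_atTop_of_one_lt hratio).eventually_ge_atTop K⁻¹
      filter_upwards [hgrow, eventually_ge_atTop (m + 2*J + 1), eventually_ge_atTop 1]
        with n hgn hn hn1
      have hWn := hmain n hn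
      have h2 : t'^n ≤ K * t^n := by
        have hne : (t'^n : ℝ) ≠ 0 := ne_of_gt (pow_pos ht'0 n)
        have hid : K * (t/t')^n * t'^n = K * t^n := by
          rw [div_pow]
          field_simp
        have hone : 1 ≤ K * (t/t')^n := by
          calc (1:ℝ) = K * K⁻¹ := (mul_inv_cancel₀ (ne_of_gt hK0)).symm
            _ ≤ K * (t/t')^n := mul_le_mul_of_nonneg_left hgn (le_of_lt hK0)
        calc t'^n = 1 * t'^n := (one_mul _).symm
          _ ≤ (K * (t/t')^n) * t'^n :=
              mul_le_mul_of_nonneg_right hone (pow_nonneg (le_of_lt ht'0) n)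
          _ = K * t^n := hid
      have hWn' : t'^n ≤ walkTotal H n x := le_trans h2 hWn
      calc b < t' := hbt'
        _ = (t'^n) ^ ((n:ℝ))⁻¹ := (Real.pow_rpow_inv_natCast (le_of_lt ht'0) (by omega)).symm
        _ ≤ (walkTotal H n x) ^ ((n:ℝ))⁻¹ :=
            Real.rpow_le_rpow (pow_nonneg (le_of_lt ht'0) n) hWn' (by positivity)
  · -- UPPER bound
    have hdb : d < b := lt_of_le_of_lt (le_max_left _ _) hb
    have hrb : r < b := lt_of_le_of_lt (le_max_right _ _) hb
    set b' : ℝ := (max d r + b)/2 with hb'def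
    have hb'b : b' < b := by rw [hb'def]; rcases max_cases d r with ⟨h1, _⟩ | ⟨h1, _⟩ <;>
      rw [h1] <;> linarith
    have hdb' : d < b' := by
      rw [hb'def]
      have := le_max_left d r
      linarith [lt_of_le_of_lt (le_max_left d r) hb]
    have hrb' : r < b' := by
      rw [hb'def]
      linarith [lt_of_le_of_lt (le_max_right d r) hb, le_max_right d r]
    have hb'0 : 0 < b' := lt_trans hd hdb'
    set ρ : ℝ := (r + b')/2 with hρdef
    have hrρ : r < ρ := by rw [hρdef]; linarith
    have hρb' : ρ < b' := by rw [hρdef]; linarith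
    have hρpos : 0 < ρ := by rw [hρdef]; linarith
    have hρ0 : 0 ≤ ρ := le_of_lt hρpos
    set M : ℝ := max d ρ with hMdef
    have hM0 : 0 < M := lt_of_lt_of_le hd (le_max_left _ _)
    have hMb' : M < b' := by rw [hMdef]; exact max_lt hdb' hρb'
    obtain ⟨N0, hN0⟩ := eventually_atTop.1 (hr.eventually_le_const hrρ)
    set N := max N0 1 with hNdef
    have hdiag_up : ∀ k : ℕ, N ≤ k → matPow H (2*k) o o ≤ ρ^(2*k) := by
      intro k hk
      have hk1 : 1 ≤ k := le_trans (le_max_right _ _) hk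
      have hroot := hN0 k (le_trans (le_max_left _ _) hk)
      calc matPow H (2*k) o o
          = ((matPow H (2*k) o o) ^ (((2*k : ℕ):ℝ))⁻¹)^(2*k) :=
            (Real.rpow_inv_natCast_pow (hPnn _ o o) (by omega)).symm
        _ ≤ ρ^(2*k) := pow_le_pow_left₀ (Real.rpow_nonneg (hPnn _ o o) _) hroot _
    set C : ℝ := (∑ k ∈ Finset.range N, matPow H (2*k) o o / ρ^(2*k)) + 1 with hCdef
    have hsum0 : 0 ≤ ∑ k ∈ Finset.range N, matPow H (2*k) o o / ρ^(2*k) :=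
      Finset.sum_nonneg fun i _ => div_nonneg (hPnn _ o o) (pow_nonneg hρ0 _)
    have hC1 : 1 ≤ C := by rw [hCdef]; linarith
    have hC0 : 0 ≤ C := le_trans zero_le_one hC1
    have hCall : ∀ k : ℕ, matPow H (2*k) o o ≤ C * ρ^(2*k) := by
      intro k
      rcases lt_or_ge k N with hk | hk
      · have h1 : matPow H (2*k) o o / ρ^(2*k)
            ≤ ∑ i ∈ Finset.range N, matPow H (2*i) o o / ρ^(2*i) :=
          Finset.single_le_sum (f := fun i => matPow H (2*i) o o / ρ^(2*i))
            (fun i _ => div_nonneg (hPnn _ o o) (pow_nonneg hρ0 _)) (Finset.mem_range.2 hk)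
        have h2 : matPow H (2*k) o o = (matPow H (2*k) o o / ρ^(2*k)) * ρ^(2*k) :=
          (div_mul_cancel₀ _ (ne_of_gt (pow_pos hρpos _))).symm
        rw [h2]
        have h3 : matPow H (2*k) o o / ρ^(2*k) ≤ C := by rw [hCdef]; linarith
        exact mul_le_mul_of_nonneg_right h3 (pow_nonneg hρ0 _)
      · calc matPow H (2*k) o o ≤ ρ^(2*k) := hdiag_up k hk
          _ ≤ C * ρ^(2*k) := le_mul_of_one_le_left (pow_nonneg hρ0 _) hC1
    set B : ℝ := Real.sqrt C with hBdef
    have hB0 : 0 ≤ B := Real.sqrt_nonneg _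
    have hBsq : B^2 = C := Real.sq_sqrt hC0
    have hentry : ∀ k : ℕ, matPow H k x o ≤ B * ρ^k := by
      intro k
      have h1 := hsq k x
      have h2 := hCall k
      have h3 : C * ρ^(2*k) = (B * ρ^k)^2 := by
        rw [mul_pow, hBsq, ← pow_mul, Nat.mul_comm k 2]
      nlinarith [hPnn k x o, mul_nonneg hB0 (pow_nonneg hρ0 k)]
    have hWub : ∀ mm : ℕ, walkTotal H (mm+1) x
        ≤ M^(mm+1) + σ * B * ((mm:ℝ)+1) * M^mm := by
      intro mm
      rw [hkey]
      have hle : ∀ k ∈ Finset.range (mm+1),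
          d^(mm+1-1-k) * matPow H k x o ≤ B * M^mm := by
        intro k hk
        simp only [Finset.mem_range] at hk
        have e1 : mm + 1 - 1 - k = mm - k := by omega
        calc d^(mm+1-1-k) * matPow H k x o ≤ M^(mm-k) * (B * ρ^k) := by
              rw [e1]
              exact mul_le_mul (pow_le_pow_left₀ hd0 (le_max_left d ρ) _) (hentry k)
                (hPnn k x o) (pow_nonneg (le_of_lt hM0) _)
          _ ≤ M^(mm-k) * (B * M^k) := by
              refine mul_le_mul_of_nonneg_left ?_ (pow_nonneg (le_of_lt hM0) _)
              exact mul_le_mul_of_nonneg_left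
                (pow_le_pow_left₀ hρ0 (le_max_right d ρ) _) hB0
          _ = B * M^mm := by
              rw [mul_comm (M^(mm-k)) (B * M^k), mul_assoc, ← pow_add]
              congr 2
              omega
      have hSle : ∑ k ∈ Finset.range (mm+1), d^(mm+1-1-k) * matPow H k x o
          ≤ ((mm:ℝ)+1) * (B * M^mm) := by
        calc ∑ k ∈ Finset.range (mm+1), d^(mm+1-1-k) * matPow H k x o
            ≤ ∑ _k ∈ Finset.range (mm+1), B * M^mm := Finset.sum_le_sum hle
          _ = ((mm:ℝ)+1) * (B * M^mm) := by
              rw [Finset.sum_const, Finset.card_range, nsmul_eq_mul]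
              push_cast
              ring
      have hdM : d^(mm+1) ≤ M^(mm+1) := pow_le_pow_left₀ hd0 (le_max_left d ρ) _
      have h4 := mul_le_mul_of_nonneg_left hSle hσ
      nlinarith [h4, hdM]
    set s : ℝ := M / b' with hsdef
    have hs0 : 0 ≤ s := le_of_lt (div_pos hM0 hb'0)
    have hs1 : s < 1 := by rw [hsdef]; exact (div_lt_one hb'0).2 hMb'
    have hF : Tendsto (fun mm : ℕ => s^(mm+1) + (σ*B/b') * ((mm:ℝ)*s^mm + s^mm))
        atTop (𝓝 0) := by
      have h1 : Tendsto (fun mm : ℕ => s^mm) atTop (𝓝 0) :=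
        tendsto_pow_atTop_nhds_zero_of_lt_one hs0 hs1
      have h2 : Tendsto (fun mm : ℕ => (mm:ℝ) * s^mm) atTop (𝓝 0) :=
        tendsto_self_mul_const_pow_of_lt_one hs0 hs1
      have h3 : Tendsto (fun mm : ℕ => s^(mm+1)) atTop (𝓝 0) := by
        have := h1.const_mul s
        simp only [mul_zero] at this
        refine this.congr fun mm => ?_
        rw [pow_succ]; ring
      have h5 := h3.add (((h2.add h1)).const_mul (σ*B/b'))
      simpa using h5
    have hev2 : ∀ᶠ mm : ℕ in atTop,
        M^(mm+1) + σ * B * ((mm:ℝ)+1) * M^mm ≤ b'^(mm+1) := by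
      filter_upwards [hF.eventually_le_const (show (0:ℝ) < 1 by norm_num)] with mm hmm
      have hb'ne : (b':ℝ) ≠ 0 := ne_of_gt hb'0
      have e1 : s^(mm+1) * b'^(mm+1) = M^(mm+1) := by
        rw [hsdef, div_pow, div_mul_cancel₀ _ (pow_ne_zero _ hb'ne)]
      have e2 : s^mm * b'^(mm+1) = M^mm * b' := by
        rw [hsdef, div_pow, pow_succ, ← mul_assoc,
          div_mul_cancel₀ _ (pow_ne_zero _ hb'ne)]
      have hident : (s^(mm+1) + (σ*B/b') * ((mm:ℝ)*s^mm + s^mm)) * b'^(mm+1)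
          = M^(mm+1) + σ*B*((mm:ℝ)+1)*M^mm := by
        calc (s^(mm+1) + (σ*B/b') * ((mm:ℝ)*s^mm + s^mm)) * b'^(mm+1)
            = s^(mm+1)*b'^(mm+1) + (σ*B/b') * (((mm:ℝ)+1) * (s^mm * b'^(mm+1))) := by
              ring
          _ = M^(mm+1) + (σ*B/b') * (((mm:ℝ)+1) * (M^mm * b')) := by rw [e1, e2]
          _ = M^(mm+1) + σ*B*((mm:ℝ)+1)*M^mm := by
              rw [div_mul_eq_mul_div, mul_comm (((mm:ℝ)+1)) (M^mm * b')]
              field_simp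
      rw [← hident]
      calc (s^(mm+1) + (σ*B/b') * ((mm:ℝ)*s^mm + s^mm)) * b'^(mm+1)
          ≤ 1 * b'^(mm+1) :=
            mul_le_mul_of_nonneg_right hmm (pow_nonneg (le_of_lt hb'0) _)
        _ = b'^(mm+1) := one_mul _
    obtain ⟨N2, hN2⟩ := eventually_atTop.1 hev2
    filter_upwards [eventually_ge_atTop (N2+1)] with n hn
    obtain ⟨mm, rfl⟩ : ∃ mm, n = mm + 1 := ⟨n-1, by omega⟩
    have h1 := le_trans (hWub mm) (hN2 mm (by omega))
    calc (walkTotal H (mm+1) x) ^ (((mm+1 : ℕ):ℝ))⁻¹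
        ≤ (b'^(mm+1)) ^ (((mm+1 : ℕ):ℝ))⁻¹ :=
          Real.rpow_le_rpow (hWnn _ x) h1 (by positivity)
      _ = b' := Real.pow_rpow_inv_natCast (le_of_lt hb'0) (by omega)
      _ < b := hb'b
end

section
/- Let G be a d-regular graph whose simple random walk is transient (so f_{oo}(1/d) < ∞), and set σ* = d/f_{oo}(1/d). Then for 0 ≤ σ < σ*, the Uniform Random Walk on G + σV_{{o}} exists and its transition probabilities are u^σ_{xy} = (H_{xy}/d) · (1 − (σ/d)f_{oo}(1/d) + (σ/d)f_{oy}(1/d)) / (1 − (σ/d)f_{oo}(1/d) + (σ/d)f_{ox}(1/d)), where f_{xy}(t) = ((1−tA)^{-1})_{xy}. -/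
open Filter Topology Classical

/-- `f_{xy}(t) = ∑_n (M^n)_{xy} t^n`. -/
noncomputable def genFun {V : Type*} (M : V → V → ℝ) (t : ℝ) (x y : V) : ℝ :=
  ∑' n : ℕ, matPow M n x y * t^n

/-!
Write `W_n(x)` for the walk totals of `H = A + σ 1_o 1_o*`. Splitting a path at its first use of
the loop gives `W_n(x) = d^n + σ ∑_{m<n} (A^m)_{xo} W_{n-1-m}(o)`. For `x = o` the normalised
totals `b_n = W_n(o)/d^n` therefore satisfy the renewal equation
`b_n = 1 + (σ/d) ∑_{m<n} a_m b_{n-1-m}` with `a_m = (A^m)_{oo} d^{-m}`, whose solution increases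
and, when `(σ/d) f_{oo}(1/d) < 1`, stays below `(1 - (σ/d) f_{oo}(1/d))⁻¹`, hence converges
to it.
Dominated convergence then gives
`W_n(x)/d^n → (1 - (σ/d) f_{oo}(1/d) + (σ/d) f_{ox}(1/d)) / (1 - (σ/d) f_{oo}(1/d))`,
and the URW kernel is `H_{xy}/d` times a ratio of two such limits.
-/

open Function Finset

section LocallyFinite

variable {V : Type*} {M : V → V → ℝ}

lemma tsum_mul_eq_sum_toFinset {f : V → ℝ} (hf : (support f).Finite) (g : V → ℝ) :
    ∑' z, f z * g z = ∑ z ∈ hf.toFinset, f z * g z :=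
  tsum_eq_sum' <| by simp only [Set.Finite.coe_toFinset]; exact support_mul_subset_left f g

lemma summable_mul_of_support_finite {f : V → ℝ} (hf : (support f).Finite) (g : V → ℝ) :
    Summable fun z => f z * g z :=
  summable_of_hasFiniteSupport <| show Set.Finite _ from hf.subset (support_mul_subset_left f g)

lemma matPow_nonneg (hM : ∀ x y, 0 ≤ M x y) : ∀ n x y, 0 ≤ matPow M n x y
  | 0, x, y => by unfold matPow; split_ifs <;> norm_num
  | n + 1, x, y => tsum_nonneg fun z => mul_nonneg (hM x z) (matPow_nonneg hM n z y)

lemma matPow_support_finite (hM : ∀ x, (support (M x)).Finite) :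
    ∀ n x, (support (matPow M n x)).Finite
  | 0, x => (Set.finite_singleton x).subset fun y hy => by
      by_contra hxy
      exact hy (if_neg (Ne.symm hxy))
  | n + 1, x => ((hM x).biUnion fun z _ => matPow_support_finite hM n z).subset fun y hy => by
      have hy : ∑' z, M x z * matPow M n z y ≠ 0 := hy
      rw [tsum_mul_eq_sum_toFinset (hM x)] at hy
      obtain ⟨z, hz, hne⟩ := exists_ne_zero_of_sum_ne_zero hy
      exact Set.mem_biUnion ((hM x).mem_toFinset.1 hz) (right_ne_zero_of_mul hne)

lemma tsum_mul_tsum_comm (hM : ∀ x, (support (M x)).Finite) {g : V → V → ℝ}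
    (hg : ∀ z, (support (g z)).Finite) (x : V) :
    ∑' z, M x z * ∑' w, g z w = ∑' w, ∑' z, M x z * g z w := by
  simp_rw [← tsum_mul_left]
  refine (Summable.tsum_comm (summable_of_hasFiniteSupport ?_)).symm
  refine ((hM x).prod ((hM x).biUnion fun z _ => hg z)).subset ?_
  rintro ⟨z, w⟩ h
  obtain ⟨hz, hw⟩ := mul_ne_zero_iff.1 h
  exact ⟨hz, Set.mem_biUnion hz hw⟩

lemma walkTotal_succ (hM : ∀ x, (support (M x)).Finite) (n : ℕ) (x : V) :
    walkTotal M (n + 1) x = ∑' z, M x z * walkTotal M n z :=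
  (tsum_mul_tsum_comm hM (matPow_support_finite hM n) x).symm

lemma matPow_succ (hM : ∀ x, (support (M x)).Finite) :
    ∀ n x y, matPow M (n + 1) x y = ∑' z, matPow M n x z * M z y
  | 0, x, y => by simp [matPow]
  | n + 1, x, y => by
    calc matPow M (n + 2) x y = ∑' z, M x z * ∑' w, matPow M n z w * M w y := by
          simp_rw [← matPow_succ hM n]; rfl
      _ = ∑' w, ∑' z, M x z * (matPow M n z w * M w y) :=
          tsum_mul_tsum_comm hM (fun z => (matPow_support_finite hM n z).subset
            (support_mul_subset_left _ _)) x
      _ = ∑' w, matPow M (n + 1) x w * M w y := by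
          simp_rw [← mul_assoc, tsum_mul_right]; rfl

lemma matPow_symm (hM : ∀ x, (support (M x)).Finite) (hsymm : ∀ x y, M x y = M y x) :
    ∀ n x y, matPow M n x y = matPow M n y x
  | 0, x, y => by simp only [matPow, eq_comm]
  | n + 1, x, y => by
    rw [matPow_succ hM]
    exact tsum_congr fun z => by rw [matPow_symm hM hsymm n x z, hsymm z y, mul_comm]

lemma walkTotal_eq_pow (hM : ∀ x, (support (M x)).Finite) {d : ℝ}
    (hreg : ∀ x, ∑' y, M x y = d) :
    ∀ n x, walkTotal M n x = d ^ n
  | 0, x => by simp [walkTotal, matPow]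
  | n + 1, x => by
    simp_rw [walkTotal_succ hM, walkTotal_eq_pow hM hreg n, tsum_mul_right, hreg, pow_succ']

end LocallyFinite

section LoopPerturbation

variable {V : Type*} {A : V → V → ℝ} {o : V} {σ : ℝ}

noncomputable def loopPerturb (A : V → V → ℝ) (o : V) (σ : ℝ) : V → V → ℝ :=
  fun x y => A x y + if x = o ∧ y = o then σ else 0

lemma loopPerturb_support_finite (hA : ∀ x, (support (A x)).Finite) (x : V) :
    (support (loopPerturb A o σ x)).Finite :=
  ((hA x).union (Set.finite_singleton o)).subset <|
    (support_add _ _).trans <| Set.union_subset_union_right _ fun y hy => by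
      by_contra hyo
      exact hy (if_neg fun h => hyo h.2)

lemma tsum_loopPerturb_mul (hA : ∀ x, (support (A x)).Finite) (x : V) (g : V → ℝ) :
    ∑' z, loopPerturb A o σ x z * g z = ∑' z, A x z * g z + σ * (matPow A 0 x o * g o) := by
  have hloop : HasSum (fun z => (if x = o ∧ z = o then σ else 0) * g z)
      (σ * (matPow A 0 x o * g o)) := by
    convert hasSum_single (f := fun z => (if x = o ∧ z = o then σ else 0) * g z) o
      (fun z hz => by simp [hz]) using 1
    by_cases hx : x = o <;> simp [hx, matPow]
  simp_rw [loopPerturb, add_mul]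
  rw [(summable_mul_of_support_finite (hA x) g).tsum_add hloop.summable, hloop.tsum_eq]

lemma walkTotal_loopPerturb (hA : ∀ x, (support (A x)).Finite) :
    ∀ n x, walkTotal (loopPerturb A o σ) n x = walkTotal A n x +
      σ * ∑ m ∈ range n, matPow A m x o * walkTotal (loopPerturb A o σ) (n - 1 - m) o
  | 0, x => by simp [walkTotal, matPow]
  | n + 1, x => by
    set S := (hA x).toFinset
    have hrow : ∀ g : V → ℝ, ∑' z, A x z * g z = ∑ z ∈ S, A x z * g z :=
      tsum_mul_eq_sum_toFinset (hA x)
    have hpath : ∀ m, matPow A (m + 1) x o = ∑ z ∈ S, A x z * matPow A m z o :=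
      fun m => hrow _
    have hfirst : ∑ z ∈ S, A x z * walkTotal (loopPerturb A o σ) n z =
        ∑ z ∈ S, A x z * walkTotal A n z + σ * ∑ m ∈ range n,
          matPow A (m + 1) x o * walkTotal (loopPerturb A o σ) (n - 1 - m) o := by
      simp_rw [walkTotal_loopPerturb hA n, hpath, mul_add, sum_add_distrib, mul_sum, sum_mul]
      rw [sum_comm]
      refine congrArg _ (sum_congr rfl fun m _ => ?_)
      rw [mul_sum]
      exact sum_congr rfl fun z _ => by ring
    rw [walkTotal_succ (loopPerturb_support_finite hA), tsum_loopPerturb_mul hA, hrow, hfirst,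
      walkTotal_succ hA, hrow, sum_range_succ']
    simp only [Nat.add_sub_cancel, Nat.sub_zero, Nat.sub_sub, add_comm 1]
    ring

end LoopPerturbation

section Renewal

variable {a b : ℕ → ℝ} {c : ℝ}

lemma tendsto_sum_range_mul_sub {g : ℕ → ℝ} (hg : Summable g) {B : ℝ}
    (hb : ∀ n, |b n| ≤ B) {l : ℝ} (hbl : Tendsto b atTop (𝓝 l)) :
    Tendsto (fun n => ∑ m ∈ range n, g m * b (n - 1 - m)) atTop (𝓝 ((∑' m, g m) * l)) := by
  have hdom := tendsto_tsum_of_dominated_convergence (𝓕 := atTop) (g := fun m => g m * l)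
    (f := fun n m => if m < n then g m * b (n - 1 - m) else 0) (hg.abs.mul_right B)
    (fun m => by
      have hshift : Tendsto (fun n => n - 1 - m) atTop atTop := by
        simpa [Nat.sub_sub] using tendsto_sub_atTop_nat (1 + m)
      refine (tendsto_const_nhds.mul (hbl.comp hshift)).congr' ?_
      filter_upwards [eventually_gt_atTop m] with n hn using (if_pos hn).symm)
    (Eventually.of_forall fun n m => by
      split_ifs
      · rw [Real.norm_eq_abs, abs_mul]
        exact mul_le_mul_of_nonneg_left (hb _) (abs_nonneg _)
      · simpa using mul_nonneg (abs_nonneg (g m)) ((abs_nonneg _).trans (hb 0)))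
  rw [tsum_mul_right] at hdom
  refine hdom.congr fun n => ?_
  rw [tsum_eq_sum (s := range n) fun m hm => if_neg (by simpa using hm)]
  exact sum_congr rfl fun m hm => if_pos (mem_range.1 hm)

variable (ha : ∀ m, 0 ≤ a m) (hc : 0 ≤ c)
  (hrec : ∀ n, b n = 1 + c * ∑ m ∈ range n, a m * b (n - 1 - m))
include ha hc hrec

lemma renewal_monotone : Monotone b := by
  refine monotone_nat_of_le_succ fun n => ?_
  induction n using Nat.strong_induction_on with
  | _ n ih =>
    have hb0 : b 0 = 1 := by simpa using hrec 0
    have hshift : ∑ m ∈ range n, a m * b (n - 1 - m) ≤ ∑ m ∈ range n, a m * b (n - m) :=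
      sum_le_sum fun m hm => by
        have hmn := mem_range.1 hm
        rw [show n - m = n - 1 - m + 1 by omega]
        exact mul_le_mul_of_nonneg_left (ih _ (by omega)) (ha m)
    rw [hrec n, hrec (n + 1), sum_range_succ, Nat.add_sub_cancel, Nat.sub_self, hb0]
    gcongr
    linarith [ha n]

lemma renewal_le (hsum : Summable a) (hcf : c * ∑' m, a m < 1) (n : ℕ) :
    b n ≤ (1 - c * ∑' m, a m)⁻¹ := by
  have hB : 1 + c * ((∑' m, a m) * (1 - c * ∑' m, a m)⁻¹) = (1 - c * ∑' m, a m)⁻¹ := by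
    field_simp [(sub_pos.2 hcf).ne']
    ring
  set B := (1 - c * ∑' m, a m)⁻¹
  induction n using Nat.strong_induction_on with
  | _ n ih =>
    have hconv : ∑ m ∈ range n, a m * b (n - 1 - m) ≤ (∑' m, a m) * B :=
      calc ∑ m ∈ range n, a m * b (n - 1 - m) ≤ ∑ m ∈ range n, a m * B :=
            sum_le_sum fun m hm => mul_le_mul_of_nonneg_left
              (ih _ (by have := mem_range.1 hm; omega)) (ha m)
        _ ≤ (∑' m, a m) * B := by
            rw [← sum_mul]
            exact mul_le_mul_of_nonneg_right (hsum.sum_le_tsum _ fun m _ => ha m)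
              (inv_nonneg.2 (sub_pos.2 hcf).le)
    rw [hrec n, ← hB]
    gcongr

lemma one_le_renewal (n : ℕ) : 1 ≤ b n := by
  simpa using (hrec 0).symm.le.trans (renewal_monotone ha hc hrec (Nat.zero_le n))

lemma renewal_tendsto (hsum : Summable a) (hcf : c * ∑' m, a m < 1) :
    Tendsto b atTop (𝓝 (1 - c * ∑' m, a m)⁻¹) := by
  have hmono := renewal_monotone ha hc hrec
  have hle := renewal_le ha hc hrec hsum hcf
  have hB0 : 0 ≤ (1 - c * ∑' m, a m)⁻¹ := inv_nonneg.2 (sub_pos.2 hcf).le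
  have hlim : Tendsto b atTop (𝓝 (⨆ n, b n)) :=
    tendsto_atTop_ciSup hmono ⟨_, Set.forall_mem_range.2 hle⟩
  have hfix : ⨆ n, b n = 1 + c * ((∑' m, a m) * ⨆ n, b n) := by
    refine tendsto_nhds_unique hlim (Tendsto.congr (fun n => (hrec n).symm) ?_)
    refine tendsto_const_nhds.add (Tendsto.const_mul c ?_)
    exact tendsto_sum_range_mul_sub hsum
      (fun n => abs_le.2 ⟨by linarith [one_le_renewal ha hc hrec n], hle n⟩) hlim
  rwa [eq_inv_of_mul_eq_one_left (a := ⨆ n, b n) (b := 1 - c * ∑' m, a m)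
    (by linear_combination hfix)] at hlim

end Renewal

lemma one_le_genFun_self {V : Type*} {M : V → V → ℝ} (hM : ∀ x y, 0 ≤ M x y) {t : ℝ}
    (ht : 0 ≤ t) {x : V} (hsum : Summable fun n => matPow M n x x * t ^ n) :
    1 ≤ genFun M t x x := by
  unfold genFun
  simpa [matPow] using
    hsum.le_tsum 0 fun n _ => mul_nonneg (matPow_nonneg hM n x x) (pow_nonneg ht n)

section RegularGraph

variable {V : Type*} {A : V → V → ℝ} {d σ : ℝ} {o : V}
  (hA : ∀ x, (support (A x)).Finite) (hsymm : ∀ x y, A x y = A y x)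
  (hreg : ∀ x, ∑' y, A x y = d)
include hA hsymm hreg

lemma walkTotal_loopPerturb_div_pow (hd : d ≠ 0) (n : ℕ) (x : V) :
    walkTotal (loopPerturb A o σ) n x / d ^ n = 1 + σ / d * ∑ m ∈ range n,
      matPow A m o x * (1 / d) ^ m *
        (walkTotal (loopPerturb A o σ) (n - 1 - m) o / d ^ (n - 1 - m)) := by
  rw [walkTotal_loopPerturb hA, walkTotal_eq_pow hA hreg, add_div, div_self (pow_ne_zero _ hd),
    mul_sum, sum_div, mul_sum]
  refine congrArg _ (sum_congr rfl fun m hm => ?_)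
  have hdn : d ^ n = d ^ m * d ^ (n - 1 - m) * d := by
    rw [← pow_add, ← pow_succ]
    congr 1
    have := mem_range.1 hm
    omega
  rw [matPow_symm hA hsymm m x o, hdn, one_div, inv_pow]
  field_simp

lemma tendsto_walkTotal_loopPerturb_div_pow (hd : 0 < d) (hnn : ∀ x y, 0 ≤ A x y)
    (htrans : ∀ y, Summable fun n => matPow A n o y * (1 / d) ^ n) (hσ : 0 ≤ σ)
    (hσlt : σ / d * genFun A (1 / d) o o < 1) (x : V) :
    Tendsto (fun n => walkTotal (loopPerturb A o σ) n x / d ^ n) atTop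
      (𝓝 ((1 - σ / d * genFun A (1 / d) o o + σ / d * genFun A (1 / d) o x) /
        (1 - σ / d * genFun A (1 / d) o o))) := by
  unfold genFun at hσlt ⊢
  have hrec := fun n => walkTotal_loopPerturb_div_pow hA hsymm hreg (σ := σ) (o := o) hd.ne' n o
  have ha : ∀ m, 0 ≤ matPow A m o o * (1 / d) ^ m := fun m =>
    mul_nonneg (matPow_nonneg hnn m o o) (by positivity)
  have hc : 0 ≤ σ / d := div_nonneg hσ hd.le
  have hB : 0 ≤ (1 - σ / d * ∑' m, matPow A m o o * (1 / d) ^ m)⁻¹ :=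
    inv_nonneg.2 (sub_pos.2 hσlt).le
  have hbound := fun n => abs_le.2
    ⟨by linarith [one_le_renewal ha hc hrec n], renewal_le ha hc hrec (htrans o) hσlt n⟩
  have hconv := tendsto_sum_range_mul_sub (htrans x) hbound
    (renewal_tendsto ha hc hrec (htrans o) hσlt)
  convert ((hconv.const_mul (σ / d)).const_add 1).congr
    fun n => (walkTotal_loopPerturb_div_pow hA hsymm hreg hd.ne' n x).symm using 2
  set c := σ / d
  set F := ∑' m, matPow A m o o * (1 / d) ^ m
  have hF : 1 - c * F ≠ 0 := (sub_pos.2 hσlt).ne'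
  field_simp

end RegularGraph

theorem urw_transient_phase_general
    {V : Type*} (A : V → V → ℝ) (d : ℝ) (hd : 0 < d)
    (hAsymm : ∀ x y, A x y = A y x)
    (hAnn : ∀ x y, 0 ≤ A x y)
    (hloc : ∀ x, (Function.support (A x)).Finite)
    (hreg : ∀ x, ∑' y, A x y = d)
    (o : V)
    (htrans : ∀ y, Summable (fun n : ℕ => matPow A n o y * (1/d)^n))
    (σ : ℝ) (hσ : 0 ≤ σ) (hσlt : σ < d / genFun A (1/d) o o)
    (H : V → V → ℝ)
    (hH : H = fun x y => A x y + if x = o ∧ y = o then σ else 0) :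
    ∀ x y : V, 0 < H x y →
      Tendsto (fun n : ℕ => H x y * walkTotal H (n-1) y / walkTotal H n x) atTop
        (𝓝 ((H x y / d) *
          ((1 - (σ/d) * genFun A (1/d) o o + (σ/d) * genFun A (1/d) o y) /
           (1 - (σ/d) * genFun A (1/d) o o + (σ/d) * genFun A (1/d) o x)))) := by
  intro x y _
  obtain rfl : H = loopPerturb A o σ := hH
  have hf : 1 ≤ genFun A (1 / d) o o := one_le_genFun_self hAnn (by positivity) (htrans o)
  have hσlt' : σ / d * genFun A (1 / d) o o < 1 := by
    rw [div_mul_eq_mul_div, div_lt_one hd]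
    exact (lt_div_iff₀ (by linarith)).1 hσlt
  have hlim := tendsto_walkTotal_loopPerturb_div_pow hloc hAsymm hreg hd hAnn htrans hσ hσlt'
  have hnum : 0 < 1 - σ / d * genFun A (1 / d) o o + σ / d * genFun A (1 / d) o x := by
    have hfx : 0 ≤ genFun A (1 / d) o x :=
      tsum_nonneg fun n => mul_nonneg (matPow_nonneg hAnn n o x) (by positivity)
    have := mul_nonneg (div_nonneg hσ hd.le) hfx
    linarith
  have hden : 0 < 1 - σ / d * genFun A (1 / d) o o := sub_pos.2 hσlt'
  have hratio := ((hlim y).div ((tendsto_add_atTop_iff_nat 1).2 (hlim x))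
    (div_pos hnum hden).ne').const_mul (loopPerturb A o σ x y / d)
  rw [div_div_div_cancel_right₀ hden.ne'] at hratio
  rw [← tendsto_add_atTop_iff_nat 1]
  refine hratio.congr fun n => ?_
  simp only [Pi.div_apply, Nat.add_sub_cancel, pow_succ]
  field_simp

/-- let `G` be a `d`-regular graph with transient simple random walk, so
`f_{oo}(1/d) < ∞`, and `σ* = d/f_{oo}(1/d)`. For `0 ≤ σ < σ*` the Uniform Random Walk on
`G + σ V_{o}` exists, with transition probabilities
`u^σ_{xy} = (H_{xy}/d)·(1 − (σ/d)f_{oo}(1/d) + (σ/d)f_{oy}(1/d))/(1 − (σ/d)f_{oo}(1/d) + (σ/d)f_{ox}(1/d))`. -/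
theorem urw_transient_phase
    {V : Type*} (A : V → V → ℝ) (d : ℝ) (hd : 0 < d)
    (hAsymm : ∀ x y, A x y = A y x)
    (hAnn : ∀ x y, 0 ≤ A x y)
    (hloc : ∀ x, (Function.support (A x)).Finite)
    (hreg : ∀ x, ∑' y, A x y = d)
    (hconn : ∀ x y : V, ∃ n : ℕ, 0 < matPow A n x y)
    (o : V)
    (htrans : ∀ y, Summable (fun n : ℕ => matPow A n o y * (1/d)^n))
    (σ : ℝ) (hσ : 0 ≤ σ) (hσlt : σ < d / genFun A (1/d) o o)
    (H : V → V → ℝ)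
    (hH : H = fun x y => A x y + if x = o ∧ y = o then σ else 0) :
    ∀ x y : V, 0 < H x y →
      Tendsto (fun n : ℕ => H x y * walkTotal H (n-1) y / walkTotal H n x) atTop
        (𝓝 ((H x y / d) *
          ((1 - (σ/d) * genFun A (1/d) o o + (σ/d) * genFun A (1/d) o y) /
           (1 - (σ/d) * genFun A (1/d) o o + (σ/d) * genFun A (1/d) o x)))) :=
  urw_transient_phase_general A d hd hAsymm hAnn hloc hreg o htrans σ hσ hσlt H hH
end

section
/- Let A be a bounded self-adjoint operator with nonnegative entries on ℓ²(V), r(A) its spectral radius, o ∈ V with f_{oo}(1/r(A)) = ∑_n (A^n)_{oo} r(A)^{-n} < ∞, and set σ_{ℓ²} = r(A)/f_{oo}(1/r(A)). For σ > σ_{ℓ²}, the operator H = A + σ 1_o 1_o* has spectral radius r_σ > r(A) given by the unique solution t = 1/r_σ ∈ (0, 1/r(A)) of σ t f_{oo}(t) = 1, the point r_σ is an isolated eigenvalue of H, and the corresponding eigenspace is one-dimensional, spanned by the function x ↦ f_{ox}(1/r_σ), which lies in ℓ²(V). -/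
/-!
Put `φ_t = ∑ tⁿ Aⁿ 1_o`, so that `(1 - tA) φ_t = 1_o` for `t < 1/‖A‖` and `⟪1_o, φ_t⟫ = f_oo(t)`;
hence `H φ_t = t⁻¹ φ_t` whenever `σ t f_oo(t) = 1`. The map `t ↦ σ t f_oo(t)` increases strictly
and continuously on `[0, 1/‖A‖]` from `0` to a value `> 1` (this is `σ > σ_ℓ²`), so the equation
has exactly one root `t`; let `r = 1/t`. For `λ > ‖A‖`, Sherman–Morrison inverts
`λ - H = (λ - A) - σ 1_o 1_o*` unless `σ λ⁻¹ f_oo(1/λ) = 1`, i.e. unless `λ = r`, and injectivity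
of `r - A` makes every solution of `H ψ = r ψ` a multiple of `φ_t`. Finally `‖H‖ = r`: `B = r - A`
is positive with `B (t φ_t) = 1_o`, so Cauchy–Schwarz for `B` gives `σ ⟪x, 1_o⟫² ≤ ⟪x, B x⟫`,
i.e. `⟪x, H x⟫ ≤ r ‖x‖²`, while `⟪x, H x⟫ ≥ ⟪x, A x⟫ ≥ -‖A‖ ‖x‖²`.
-/

open scoped RealInnerProductSpace

section PowerSeries

variable {a : ℕ → ℝ} {R : ℝ}

lemma summable_mul_pow_of_mem_Icc (ha : ∀ n, 0 ≤ a n) (hR : Summable fun n ↦ a n * R ^ n)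
    {t : ℝ} (ht : t ∈ Set.Icc 0 R) : Summable fun n ↦ a n * t ^ n :=
  hR.of_nonneg_of_le (fun n ↦ mul_nonneg (ha n) (pow_nonneg ht.1 n))
    fun n ↦ mul_le_mul_of_nonneg_left (pow_le_pow_left₀ ht.1 ht.2 n) (ha n)

lemma continuousOn_tsum_mul_pow (ha : ∀ n, 0 ≤ a n) (hR : Summable fun n ↦ a n * R ^ n) :
    ContinuousOn (fun t ↦ ∑' n, a n * t ^ n) (Set.Icc 0 R) := by
  refine continuousOn_tsum (fun n ↦ (continuous_const.mul (continuous_pow n)).continuousOn) hR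
    fun n t ht ↦ ?_
  rw [norm_mul, norm_pow, Real.norm_of_nonneg (ha n), Real.norm_of_nonneg ht.1]
  exact mul_le_mul_of_nonneg_left (pow_le_pow_left₀ ht.1 ht.2 n) (ha n)

lemma monotoneOn_tsum_mul_pow (ha : ∀ n, 0 ≤ a n) (hR : Summable fun n ↦ a n * R ^ n) :
    MonotoneOn (fun t ↦ ∑' n, a n * t ^ n) (Set.Icc 0 R) := fun _ hs _ ht hst ↦
  (summable_mul_pow_of_mem_Icc ha hR hs).tsum_le_tsum
    (fun n ↦ mul_le_mul_of_nonneg_left (pow_le_pow_left₀ hs.1 hst n) (ha n))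
    (summable_mul_pow_of_mem_Icc ha hR ht)

lemma tsum_mul_pow_pos (ha : ∀ n, 0 ≤ a n) (ha₀ : 0 < a 0) (hR : Summable fun n ↦ a n * R ^ n)
    {t : ℝ} (ht : t ∈ Set.Icc 0 R) : 0 < ∑' n, a n * t ^ n := by
  refine ha₀.trans_le ?_
  simpa using (summable_mul_pow_of_mem_Icc ha hR ht).le_tsum 0
    fun n _ ↦ mul_nonneg (ha n) (pow_nonneg ht.1 n)

lemma strictMonoOn_mul_mul_tsum_mul_pow {c : ℝ} (hc : 0 < c) (ha : ∀ n, 0 ≤ a n) (ha₀ : 0 < a 0)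
    (hR : Summable fun n ↦ a n * R ^ n) :
    StrictMonoOn (fun t ↦ c * t * ∑' n, a n * t ^ n) (Set.Icc 0 R) := fun s hs t ht hst ↦
  calc c * s * ∑' n, a n * s ^ n ≤ c * s * ∑' n, a n * t ^ n :=
        mul_le_mul_of_nonneg_left (monotoneOn_tsum_mul_pow ha hR hs ht hst.le)
          (mul_nonneg hc.le hs.1)
    _ < c * t * ∑' n, a n * t ^ n :=
        mul_lt_mul_of_pos_right (mul_lt_mul_of_pos_left hst hc) (tsum_mul_pow_pos ha ha₀ hR ht)

lemma exists_mem_Ioo_mul_mul_tsum_mul_pow_eq_one {c : ℝ} (ha : ∀ n, 0 ≤ a n) (hR₀ : 0 ≤ R)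
    (hR : Summable fun n ↦ a n * R ^ n) (hcR : 1 < c * R * ∑' n, a n * R ^ n) :
    ∃ t ∈ Set.Ioo 0 R, c * t * ∑' n, a n * t ^ n = 1 := by
  obtain ⟨t, ht, hteq⟩ := intermediate_value_Icc hR₀
    (continuousOn_const.mul continuousOn_id |>.mul (continuousOn_tsum_mul_pow ha hR))
    (show (1 : ℝ) ∈ Set.Icc (c * 0 * ∑' n, a n * 0 ^ n) _ by simpa using hcR.le)
  refine ⟨t, ⟨ht.1.lt_of_ne ?_, ht.2.lt_of_ne ?_⟩, hteq⟩
  · rintro rfl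
    simp at hteq
  · rintro rfl
    exact hcR.ne' hteq

lemma existsUnique_mem_Ioo_mul_mul_tsum_mul_pow_eq_one {c : ℝ} (ha : ∀ n, 0 ≤ a n)
    (ha₀ : 0 < a 0) (hR₀ : 0 < R) (hR : Summable fun n ↦ a n * R ^ n)
    (hc : R⁻¹ / ∑' n, a n * R ^ n < c) :
    ∃! t, t ∈ Set.Ioo 0 R ∧ c * t * ∑' n, a n * t ^ n = 1 := by
  have hF := tsum_mul_pow_pos ha ha₀ hR ⟨hR₀.le, le_rfl⟩
  have hc₀ : 0 < c := (div_pos (inv_pos.2 hR₀) hF).trans hc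
  have hcR : 1 < c * R * ∑' n, a n * R ^ n := by
    have h := mul_lt_mul_of_pos_left ((div_lt_iff₀ hF).1 hc) hR₀
    rw [mul_inv_cancel₀ hR₀.ne'] at h
    linarith
  obtain ⟨t, ht, hteq⟩ := exists_mem_Ioo_mul_mul_tsum_mul_pow_eq_one ha hR₀.le hR hcR
  exact ⟨t, ⟨ht, hteq⟩, fun s ⟨hs, hseq⟩ ↦
    (strictMonoOn_mul_mul_tsum_mul_pow hc₀ ha ha₀ hR).injOn (Set.Ioo_subset_Icc_self hs)
      (Set.Ioo_subset_Icc_self ht) (hseq.trans hteq.symm)⟩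

section Neumann

open ContinuousLinearMap

variable {𝕜 F : Type*} [NontriviallyNormedField 𝕜] [NormedAddCommGroup F] [NormedSpace 𝕜 F]
  (A : F →L[𝕜] F) (u : F)

/-- For `u = 1_o` on `ℓ²(V)`, the coordinate of `greenFunction A u t` at `x` is `f_{ox}(t)`. -/
noncomputable def greenFunction (t : 𝕜) : F := ∑' n : ℕ, t ^ n • (A ^ n) u

variable {A}

lemma summable_inv_pow_smul_pow_apply [CompleteSpace F] {μ : 𝕜} (hμ : ‖A‖ < ‖μ‖) :
    Summable fun n : ℕ ↦ μ⁻¹ ^ n • (A ^ n) u := by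
  have hμ₀ : 0 < ‖μ‖ := (norm_nonneg A).trans_lt hμ
  have hgeom : Summable fun n : ℕ ↦ (μ⁻¹ • A) ^ n :=
    summable_geometric_of_norm_lt_one (by rwa [norm_smul, norm_inv, inv_mul_lt_one₀ hμ₀])
  simpa [smul_pow] using hgeom.mapL (ContinuousLinearMap.apply 𝕜 F u)

lemma greenFunction_sub_smul_apply {t : 𝕜} (h : Summable fun n : ℕ ↦ t ^ n • (A ^ n) u) :
    greenFunction A u t - t • A (greenFunction A u t) = u := by
  have hshift : t • A (greenFunction A u t) = ∑' n : ℕ, t ^ (n + 1) • (A ^ (n + 1)) u := by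
    rw [← smul_apply, greenFunction, (t • A).map_tsum h]
    refine tsum_congr fun n ↦ ?_
    rw [pow_succ', pow_succ', mul_smul, mul_apply_eq_comp, smul_apply, map_smul, smul_comm]
  rw [hshift, greenFunction, h.tsum_eq_zero_add]
  simp

lemma algebraMap_sub_apply_smul_greenFunction [CompleteSpace F] {μ : 𝕜} (hμ : ‖A‖ < ‖μ‖) :
    (algebraMap 𝕜 (F →L[𝕜] F) μ - A) (μ⁻¹ • greenFunction A u μ⁻¹) = u := by
  have hμ₀ : μ ≠ 0 := norm_pos_iff.1 ((norm_nonneg A).trans_lt hμ)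
  rw [sub_apply, ContinuousLinearMap.algebraMap_apply, smul_smul, mul_inv_cancel₀ hμ₀, one_smul,
    map_smul]
  exact greenFunction_sub_smul_apply u (summable_inv_pow_smul_pow_apply u hμ)

lemma isUnit_algebraMap_sub [CompleteSpace F] {μ : 𝕜} (hμ : ‖A‖ < ‖μ‖) :
    IsUnit (algebraMap 𝕜 (F →L[𝕜] F) μ - A) :=
  spectrum.mem_resolventSet_of_norm_lt_mul <|
    (mul_le_of_le_one_right (norm_nonneg A) ContinuousLinearMap.norm_id_le).trans_lt hμ

lemma inverse_algebraMap_sub_apply_algebraMap_sub [CompleteSpace F] {μ : 𝕜} (hμ : ‖A‖ < ‖μ‖)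
    (x : F) :
    Ring.inverse (algebraMap 𝕜 (F →L[𝕜] F) μ - A) ((algebraMap 𝕜 (F →L[𝕜] F) μ - A) x) = x := by
  rw [← mul_apply_eq_comp, Ring.inverse_mul_cancel _ (isUnit_algebraMap_sub hμ), one_apply_eq_self]

lemma inverse_algebraMap_sub_apply [CompleteSpace F] {μ : 𝕜} (hμ : ‖A‖ < ‖μ‖) :
    Ring.inverse (algebraMap 𝕜 (F →L[𝕜] F) μ - A) u = μ⁻¹ • greenFunction A u μ⁻¹ := by
  conv_lhs => rw [← algebraMap_sub_apply_smul_greenFunction u hμ]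
  exact inverse_algebraMap_sub_apply_algebraMap_sub hμ _

lemma injective_algebraMap_sub [CompleteSpace F] {μ : 𝕜} (hμ : ‖A‖ < ‖μ‖) :
    Function.Injective (algebraMap 𝕜 (F →L[𝕜] F) μ - A) :=
  Function.LeftInverse.injective (inverse_algebraMap_sub_apply_algebraMap_sub hμ)

end Neumann

/-- Sherman–Morrison: with `b = a⁻¹`, the inverse of `a - p` is `b + (1 - q)⁻¹ • b p b`. -/
lemma IsUnit.sub_of_mul_inverse_mul_eq_smul {𝕜 R : Type*} [Field 𝕜] [Ring R] [Algebra 𝕜 R]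
    {a p : R} (ha : IsUnit a) {q : 𝕜} (hp : p * Ring.inverse a * p = q • p) (hq : q ≠ 1) :
    IsUnit (a - p) := by
  set b := Ring.inverse a
  set c := (1 - q)⁻¹
  have hc : c - 1 - c * q = 0 := by
    linear_combination inv_mul_cancel₀ (sub_ne_zero.2 hq.symm)
  have hpbp : p * b * p * b = q • (p * b) := by rw [hp, smul_mul_assoc]
  have hbpbp : b * p * b * p = q • (b * p) := by
    simp only [mul_assoc] at hp ⊢; rw [hp, mul_smul_comm]
  refine ⟨⟨a - p, b + c • (b * p * b), ?_, ?_⟩, rfl⟩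
  · calc (a - p) * (b + c • (b * p * b))
        = a * b - p * b + c • (a * b * p * b) - c • (p * b * p * b) := by
          simp only [sub_mul, mul_add, mul_smul_comm, mul_assoc, smul_sub]; abel
      _ = 1 + (c - 1 - c * q) • (p * b) := by
          rw [Ring.mul_inverse_cancel a ha, hpbp, one_mul]; module
      _ = 1 := by rw [hc, zero_smul, add_zero]
  · calc (b + c • (b * p * b)) * (a - p)
        = b * a - b * p + c • (b * p * (b * a)) - c • (b * p * b * p) := by
          simp only [mul_sub, add_mul, smul_mul_assoc, mul_assoc]; abel
      _ = 1 + (c - 1 - c * q) • (b * p) := by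
          rw [Ring.inverse_mul_cancel a ha, hbpbp, mul_one]; module
      _ = 1 := by rw [hc, zero_smul, add_zero]

section InnerProduct

open ContinuousLinearMap InnerProductSpace

lemma InnerProductSpace.rankOne_mul_mul_rankOne {𝕜 F : Type*} [RCLike 𝕜] [NormedAddCommGroup F]
    [InnerProductSpace 𝕜 F] (x y : F) (T : F →L[𝕜] F) :
    rankOne 𝕜 x y * T * rankOne 𝕜 x y = inner 𝕜 y (T x) • rankOne 𝕜 x y := by
  rw [mul_def, comp_rankOne, mul_apply_eq_comp, rankOne_apply, map_smul, smul_apply]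

variable {E : Type*} [NormedAddCommGroup E] [InnerProductSpace ℝ E]

lemma ContinuousLinearMap.IsPositive.inner_apply_sq_le {T : E →L[ℝ] E} (hT : T.IsPositive)
    (x y : E) : ⟪x, T y⟫ ^ 2 ≤ ⟪x, T x⟫ * ⟪y, T y⟫ := by
  have h := LinearMap.BilinForm.apply_mul_apply_le_of_forall_zero_le
    ((innerₗ E).compl₂ (T : E →ₗ[ℝ] E)) hT.inner_nonneg_right x y
  have hsymm : ⟪y, T x⟫ = ⟪x, T y⟫ := by
    rw [← hT.inner_left_eq_inner_right, real_inner_comm]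
  simp only [LinearMap.compl₂_apply, innerₗ_apply_apply, coe_coe] at h
  rwa [hsymm, ← sq] at h

lemma ContinuousLinearMap.norm_le_of_forall_abs_inner_le [CompleteSpace E] {T : E →L[ℝ] E}
    (hT : IsSelfAdjoint T) {ρ : ℝ} (hρ : 0 ≤ ρ) (h : ∀ x, |⟪x, T x⟫| ≤ ρ * ‖x‖ ^ 2) :
    ‖T‖ ≤ ρ := by
  rw [T.norm_eq_iSup_rayleighQuotient hT.isSymmetric]
  refine ciSup_le fun x ↦ ?_
  rw [rayleighQuotient, reApplyInnerSelf_apply, RCLike.re_to_real, real_inner_comm, abs_div,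
    abs_sq]
  exact div_le_of_le_mul₀ (sq_nonneg _) hρ (h x)

lemma ContinuousLinearMap.abs_inner_apply_self_le (T : E →L[ℝ] E) (x : E) :
    |⟪x, T x⟫| ≤ ‖T‖ * ‖x‖ ^ 2 :=
  calc |⟪x, T x⟫| ≤ ‖x‖ * ‖T x‖ := abs_real_inner_le_norm x (T x)
    _ ≤ ‖x‖ * (‖T‖ * ‖x‖) := mul_le_mul_of_nonneg_left (T.le_opNorm x) (norm_nonneg x)
    _ = ‖T‖ * ‖x‖ ^ 2 := by ring

lemma ContinuousLinearMap.isPositive_algebraMap_sub [CompleteSpace E] {A : E →L[ℝ] E}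
    (hA : IsSelfAdjoint A) {μ : ℝ} (hμ : ‖A‖ ≤ μ) :
    (algebraMap ℝ (E →L[ℝ] E) μ - A).IsPositive := by
  refine (isPositive_iff' _).2 ⟨(IsSelfAdjoint.algebraMap _ (.all μ)).sub hA, fun x ↦ ?_⟩
  rw [sub_apply, ContinuousLinearMap.algebraMap_apply, inner_sub_left, real_inner_smul_left,
    real_inner_self_eq_norm_sq, real_inner_comm]
  nlinarith [(abs_le.1 (A.abs_inner_apply_self_le x)).2, sq_nonneg ‖x‖]

lemma ContinuousLinearMap.mem_spectrum_of_apply_eq_smul [CompleteSpace E] {T : E →L[ℝ] E}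
    {μ : ℝ} {x : E} (hx : x ≠ 0) (hTx : T x = μ • x) : μ ∈ spectrum ℝ T :=
  spectrum_eq (f := T) ▸ (Module.End.hasEigenvalue_of_hasEigenvector
    ⟨Module.End.mem_eigenspace_iff.2 hTx, hx⟩).mem_spectrum

lemma ContinuousLinearMap.le_norm_of_mem_spectrum [CompleteSpace E] {T : E →L[ℝ] E} {μ : ℝ}
    (hμ : μ ∈ spectrum ℝ T) : μ ≤ ‖T‖ :=
  (Real.le_norm_self μ).trans <| (spectrum.norm_le_norm_mul_of_mem hμ).trans <|
    mul_le_of_le_one_right (norm_nonneg T) norm_id_le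

lemma inner_greenFunction (A : E →L[ℝ] E) (u v : E) {t : ℝ}
    (h : Summable fun n : ℕ ↦ t ^ n • (A ^ n) u) :
    ⟪v, greenFunction A u t⟫ = ∑' n : ℕ, ⟪v, (A ^ n) u⟫ * t ^ n := by
  rw [greenFunction, ← innerSL_apply_apply ℝ, (innerSL ℝ v).map_tsum h]
  simp [mul_comm]

/-! `σ * μ⁻¹ * ⟪u, greenFunction A u μ⁻¹⟫ = 1` below is the equation `σ t f_oo(t) = 1` at
`t = μ⁻¹`. -/

lemma greenFunction_ne_zero_of_secular {A : E →L[ℝ] E} {u : E} {σ μ : ℝ}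
    (hsec : σ * μ⁻¹ * ⟪u, greenFunction A u μ⁻¹⟫ = 1) : greenFunction A u μ⁻¹ ≠ 0 :=
  fun h ↦ by simp [h] at hsec

section RankOnePerturbation

variable [CompleteSpace E] {A : E →L[ℝ] E} {u : E} {σ μ : ℝ}

lemma add_smul_rankOne_apply_greenFunction (hμ : ‖A‖ < μ)
    (hsec : σ * μ⁻¹ * ⟪u, greenFunction A u μ⁻¹⟫ = 1) :
    (A + σ • rankOne ℝ u u) (greenFunction A u μ⁻¹) = μ • greenFunction A u μ⁻¹ := by
  have hμ₀ : μ ≠ 0 := ((norm_nonneg A).trans_lt hμ).ne'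
  have hres := algebraMap_sub_apply_smul_greenFunction u (hμ.trans_le (Real.le_norm_self μ))
  rw [sub_apply, ContinuousLinearMap.algebraMap_apply, smul_smul, mul_inv_cancel₀ hμ₀, one_smul,
    map_smul] at hres
  rw [mul_right_comm, mul_inv_eq_one₀ hμ₀] at hsec
  rw [add_apply, smul_apply, rankOne_apply, smul_smul, hsec]
  nth_rw 2 [← hres]
  rw [smul_sub, smul_smul, mul_inv_cancel₀ hμ₀, one_smul]
  abel

lemma mem_spectrum_add_smul_rankOne (hμ : ‖A‖ < μ)
    (hsec : σ * μ⁻¹ * ⟪u, greenFunction A u μ⁻¹⟫ = 1) :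
    μ ∈ spectrum ℝ (A + σ • rankOne ℝ u u) :=
  mem_spectrum_of_apply_eq_smul (greenFunction_ne_zero_of_secular hsec)
    (add_smul_rankOne_apply_greenFunction hμ hsec)

lemma eq_smul_greenFunction_of_apply_eq_smul (hμ : ‖A‖ < μ) {ψ : E}
    (hψ : (A + σ • rankOne ℝ u u) ψ = μ • ψ) :
    ψ = (σ * ⟪u, ψ⟫ * μ⁻¹) • greenFunction A u μ⁻¹ := by
  have hμ' : ‖A‖ < ‖μ‖ := hμ.trans_le (Real.le_norm_self μ)
  apply injective_algebraMap_sub hμ'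
  rw [mul_smul, map_smul, algebraMap_sub_apply_smul_greenFunction u hμ', sub_apply,
    ContinuousLinearMap.algebraMap_apply, ← hψ, add_apply, smul_apply, rankOne_apply, smul_smul]
  abel

lemma inner_algebraMap_sub_apply_smul_greenFunction (hμ : ‖A‖ < μ) :
    ⟪μ⁻¹ • greenFunction A u μ⁻¹, (algebraMap ℝ (E →L[ℝ] E) μ - A) (μ⁻¹ • greenFunction A u μ⁻¹)⟫ =
      μ⁻¹ * ⟪u, greenFunction A u μ⁻¹⟫ := by
  rw [algebraMap_sub_apply_smul_greenFunction u (hμ.trans_le (Real.le_norm_self μ)),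
    real_inner_smul_left, real_inner_comm]

lemma pos_of_secular (hA : IsSelfAdjoint A) (hμ : ‖A‖ < μ)
    (hsec : σ * μ⁻¹ * ⟪u, greenFunction A u μ⁻¹⟫ = 1) : 0 < σ := by
  have hq := (isPositive_algebraMap_sub hA hμ.le).inner_nonneg_right (μ⁻¹ • greenFunction A u μ⁻¹)
  rw [inner_algebraMap_sub_apply_smul_greenFunction hμ] at hq
  rw [mul_assoc] at hsec
  exact pos_of_mul_pos_left (hsec ▸ one_pos) hq

lemma smul_inner_sq_le_inner_algebraMap_sub_apply (hA : IsSelfAdjoint A) (hμ : ‖A‖ < μ)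
    (hsec : σ * μ⁻¹ * ⟪u, greenFunction A u μ⁻¹⟫ = 1) (x : E) :
    σ * ⟪x, u⟫ ^ 2 ≤ ⟪x, (algebraMap ℝ (E →L[ℝ] E) μ - A) x⟫ := by
  set B := algebraMap ℝ (E →L[ℝ] E) μ - A
  have hcs := (isPositive_algebraMap_sub hA hμ.le).inner_apply_sq_le x
    (μ⁻¹ • greenFunction A u μ⁻¹)
  rw [inner_algebraMap_sub_apply_smul_greenFunction hμ,
    algebraMap_sub_apply_smul_greenFunction u (hμ.trans_le (Real.le_norm_self μ))] at hcs
  calc σ * ⟪x, u⟫ ^ 2 ≤ σ * (⟪x, B x⟫ * (μ⁻¹ * ⟪u, greenFunction A u μ⁻¹⟫)) :=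
        mul_le_mul_of_nonneg_left hcs (pos_of_secular hA hμ hsec).le
    _ = ⟪x, B x⟫ := by linear_combination ⟪x, B x⟫ * hsec

lemma norm_add_smul_rankOne_le (hA : IsSelfAdjoint A) (hμ : ‖A‖ < μ)
    (hsec : σ * μ⁻¹ * ⟪u, greenFunction A u μ⁻¹⟫ = 1) :
    ‖A + σ • rankOne ℝ u u‖ ≤ μ := by
  have hsa : IsSelfAdjoint (A + σ • rankOne ℝ u u) :=
    hA.add ((IsSelfAdjoint.all σ).smul (isPositive_rankOne_self u).isSelfAdjoint)
  refine norm_le_of_forall_abs_inner_le hsa ((norm_nonneg A).trans hμ.le) fun x ↦ ?_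
  have hform : ⟪x, (A + σ • rankOne ℝ u u) x⟫ = ⟪x, A x⟫ + σ * ⟪x, u⟫ ^ 2 := by
    rw [add_apply, smul_apply, rankOne_apply, inner_add_right, real_inner_smul_right,
      real_inner_smul_right, real_inner_comm u x]
    ring
  have hupper := smul_inner_sq_le_inner_algebraMap_sub_apply hA hμ hsec x
  rw [sub_apply, ContinuousLinearMap.algebraMap_apply, inner_sub_right, real_inner_smul_right,
    real_inner_self_eq_norm_sq] at hupper
  have hlower := (abs_le.1 (A.abs_inner_apply_self_le x)).1
  have hσ := pos_of_secular hA hμ hsec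
  rw [hform, abs_le]
  constructor <;> nlinarith [sq_nonneg ‖x‖, sq_nonneg ⟪x, u⟫]

lemma norm_add_smul_rankOne_eq (hA : IsSelfAdjoint A) (hμ : ‖A‖ < μ)
    (hsec : σ * μ⁻¹ * ⟪u, greenFunction A u μ⁻¹⟫ = 1) :
    ‖A + σ • rankOne ℝ u u‖ = μ :=
  (norm_add_smul_rankOne_le hA hμ hsec).antisymm
    (le_norm_of_mem_spectrum (mem_spectrum_add_smul_rankOne hμ hsec))

lemma secular_of_mem_spectrum (hμ : ‖A‖ < μ) (hmem : μ ∈ spectrum ℝ (A + σ • rankOne ℝ u u)) :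
    σ * μ⁻¹ * ⟪u, greenFunction A u μ⁻¹⟫ = 1 := by
  have hμ' : ‖A‖ < ‖μ‖ := hμ.trans_le (Real.le_norm_self μ)
  by_contra hne
  refine spectrum.mem_iff.1 hmem ?_
  rw [← sub_sub]
  refine (isUnit_algebraMap_sub hμ').sub_of_mul_inverse_mul_eq_smul
    (q := σ * ⟪u, Ring.inverse (algebraMap ℝ (E →L[ℝ] E) μ - A) u⟫) ?_ ?_
  · rw [smul_mul_assoc, mul_smul_comm, smul_mul_assoc, rankOne_mul_mul_rankOne]
    simp only [smul_smul]
    ring_nf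
  · rwa [inverse_algebraMap_sub_apply u hμ', real_inner_smul_right, ← mul_assoc]

end RankOnePerturbation

end InnerProduct

theorem rank_one_perturbation_spectral_general
    {V : Type*} {E : Type*} [NormedAddCommGroup E] [InnerProductSpace ℝ E]
    [CompleteSpace E]
    (A : E →L[ℝ] E) (hA : IsSelfAdjoint A)
    (e : V → E) (he : Orthonormal ℝ e)
    (hnn : ∀ (x y : V) (n : ℕ), 0 ≤ ⟪e x, (A ^ n) (e y)⟫)
    (o : V) (hAnorm : 0 < ‖A‖)
    (hsum : Summable (fun n : ℕ => ⟪e o, (A ^ n) (e o)⟫ * (‖A‖⁻¹)^n))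
    (σ : ℝ)
    (hσ : σ > ‖A‖ / ∑' n : ℕ, ⟪e o, (A ^ n) (e o)⟫ * (‖A‖⁻¹)^n)
    (H : E →L[ℝ] E)
    (hHdef : H = A + σ • ((innerSL ℝ (e o)).smulRight (e o))) :
    ‖A‖ < ‖H‖ ∧
    (σ * ‖H‖⁻¹ * ∑' n : ℕ, ⟪e o, (A ^ n) (e o)⟫ * (‖H‖⁻¹)^n = 1) ∧
    (∀ t : ℝ, t ∈ Set.Ioo 0 ‖A‖⁻¹ →
      σ * t * (∑' n : ℕ, ⟪e o, (A ^ n) (e o)⟫ * t^n) = 1 → t = ‖H‖⁻¹) ∧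
    ‖H‖ ∈ spectrum ℝ H ∧
    (∃ ε > 0, spectrum ℝ H ∩ Set.Ioo (‖H‖ - ε) (‖H‖ + ε) = {‖H‖}) ∧
    Summable (fun n : ℕ => (‖H‖⁻¹)^n • ((A ^ n) (e o))) ∧
    (let φ : E := ∑' n : ℕ, (‖H‖⁻¹)^n • ((A ^ n) (e o));
      φ ≠ 0 ∧ H φ = ‖H‖ • φ ∧ ∀ ψ : E, H ψ = ‖H‖ • ψ → ∃ c : ℝ, ψ = c • φ) := by
  rw [← InnerProductSpace.rankOne_def] at hHdef
  subst hHdef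
  have ha₀ : 0 < ⟪e o, (A ^ 0) (e o)⟫ := by simp [he.1 o]
  obtain ⟨t, ⟨ht, hsec⟩, huniq⟩ := existsUnique_mem_Ioo_mul_mul_tsum_mul_pow_eq_one (hnn o o) ha₀
    (inv_pos.2 hAnorm) hsum (by rwa [inv_inv])
  have hinner : ∀ ν, ‖A‖ < ν → ⟪e o, greenFunction A (e o) ν⁻¹⟫ =
      ∑' n : ℕ, ⟪e o, (A ^ n) (e o)⟫ * ν⁻¹ ^ n := fun ν hν ↦
    inner_greenFunction A (e o) (e o) (summable_inv_pow_smul_pow_apply (e o)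
      (hν.trans_le (Real.le_norm_self ν)))
  set μ := t⁻¹ with hμdef
  have hμ : ‖A‖ < μ := (lt_inv_comm₀ hAnorm ht.1).2 ht.2
  have hsec' : σ * μ⁻¹ * ⟪e o, greenFunction A (e o) μ⁻¹⟫ = 1 := by
    rwa [hinner μ hμ, hμdef, inv_inv]
  have hmem := mem_spectrum_add_smul_rankOne hμ hsec'
  rw [norm_add_smul_rankOne_eq hA hμ hsec']
  refine ⟨hμ, by rwa [inv_inv], fun s hs hs1 ↦ by rw [inv_inv]; exact huniq s ⟨hs, hs1⟩, hmem,
    ⟨μ - ‖A‖, sub_pos.2 hμ, ?_⟩,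
    summable_inv_pow_smul_pow_apply (e o) (hμ.trans_le (Real.le_norm_self μ)),
    greenFunction_ne_zero_of_secular hsec', add_smul_rankOne_apply_greenFunction hμ hsec',
    fun ψ hψ ↦ ⟨_, eq_smul_greenFunction_of_apply_eq_smul hμ hψ⟩⟩
  refine Set.eq_singleton_iff_unique_mem.2 ⟨⟨hmem, by linarith, by linarith⟩, ?_⟩
  rintro ν ⟨hν, hlo, -⟩
  have hAν : ‖A‖ < ν := by linarith
  have hsecν := secular_of_mem_spectrum hAν hν
  rw [hinner ν hAν] at hsecν
  exact inv_eq_iff_eq_inv.1 <|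
    huniq ν⁻¹ ⟨⟨inv_pos.2 (hAnorm.trans hAν), inv_strictAnti₀ hAnorm hAν⟩, hsecν⟩

/-- rank-one perturbation of a nonnegative irreducible bounded self-adjoint
operator `A` on `ℓ²(V)` (presented abstractly via an orthonormal family `e : V → E` whose
span is dense, with nonnegative matrix entries). With `f_{oo}(1/r(A)) < ∞` (where
`r(A) = ‖A‖` is the spectral radius of the self-adjoint `A`) and
`σ > σ_{ℓ²} = r(A)/f_{oo}(1/r(A))`, the operator `H = A + σ 1_o 1_o*` has spectral radius
`r_σ = ‖H‖ > r(A)`, given as the unique solution `t = 1/r_σ ∈ (0, 1/r(A))` of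
`σ t f_{oo}(t) = 1`; `r_σ` is an isolated point of the spectrum of `H`, it is an eigenvalue
with one-dimensional eigenspace spanned by `φ = ∑_n r_σ^{-n} A^n 1_o` (the generalized
Green function `x ↦ f_{ox}(1/r_σ)`), which lies in `ℓ²(V)`. -/
theorem rank_one_perturbation_spectral
    {V : Type*} {E : Type*} [NormedAddCommGroup E] [InnerProductSpace ℝ E]
    [CompleteSpace E]
    (A : E →L[ℝ] E) (hA : IsSelfAdjoint A)
    (e : V → E) (he : Orthonormal ℝ e)
    (htotal : (Submodule.span ℝ (Set.range e)).topologicalClosure = ⊤)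
    (hnn : ∀ (x y : V) (n : ℕ), 0 ≤ ⟪e x, (A ^ n) (e y)⟫)
    (hirr : ∀ x y : V, ∃ n : ℕ, 0 < ⟪e x, (A ^ n) (e y)⟫)
    (o : V) (hAnorm : 0 < ‖A‖)
    (hsum : Summable (fun n : ℕ => ⟪e o, (A ^ n) (e o)⟫ * (‖A‖⁻¹)^n))
    (σ : ℝ)
    (hσ : σ > ‖A‖ / ∑' n : ℕ, ⟪e o, (A ^ n) (e o)⟫ * (‖A‖⁻¹)^n)
    (H : E →L[ℝ] E)
    (hHdef : H = A + σ • ((innerSL ℝ (e o)).smulRight (e o))) :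
    ‖A‖ < ‖H‖ ∧
    (σ * ‖H‖⁻¹ * ∑' n : ℕ, ⟪e o, (A ^ n) (e o)⟫ * (‖H‖⁻¹)^n = 1) ∧
    (∀ t : ℝ, t ∈ Set.Ioo 0 ‖A‖⁻¹ →
      σ * t * (∑' n : ℕ, ⟪e o, (A ^ n) (e o)⟫ * t^n) = 1 → t = ‖H‖⁻¹) ∧
    ‖H‖ ∈ spectrum ℝ H ∧
    (∃ ε > 0, spectrum ℝ H ∩ Set.Ioo (‖H‖ - ε) (‖H‖ + ε) = {‖H‖}) ∧
    Summable (fun n : ℕ => (‖H‖⁻¹)^n • ((A ^ n) (e o))) ∧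
    (let φ : E := ∑' n : ℕ, (‖H‖⁻¹)^n • ((A ^ n) (e o));
      φ ≠ 0 ∧ H φ = ‖H‖ • φ ∧ ∀ ψ : E, H ψ = ‖H‖ • ψ → ∃ c : ℝ, ψ = c • φ) :=
  rank_one_perturbation_spectral_general A hA e he hnn o hAnorm hsum σ hσ H hHdef
end PowerSeries
end

section
/- For the d-regular tree T_d, the URW localization threshold equals σ*(T_d) = d/f_{oo}(1/d) = (d − 1) − 1/(d − 1), and the ℓ²-eigenvector threshold equals σ_{ℓ²}(T_d) = 2√(d−1)/f_{oo}(1/(2√(d−1))) = √(d−1) − 1/√(d−1). In particular, for d ≥ 3, σ_{ℓ²}(T_d) < σ*(T_d). -/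
open Filter Topology Classical

open Classical in
noncomputable def adjMat {V : Type*} (G : SimpleGraph V) : V → V → ℝ :=
  fun x y => if G.Adj x y then 1 else 0

/-!
Let `u n` count the closed walks of length `n` at `o` and `f n` the walks from a neighbour `z`
of `o` that reach `o` for the first time at step `n`; in a regular tree `f` does not depend on
the edge `(z, o)`. Cutting a closed walk at `o` where it first returns to `o`, and a first
passage from `x` to a neighbour `p` (not stepping to `p` at once) where it first returns to `x`,
gives `u (n+1) = d ∑ f j u (n-j)` and
`f (n+1) = [n = 0] + (d-1) ∑ f j f (n-j)`. Hence `Φ t = ∑ f n tⁿ` solves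
`Φ = t + (d-1) t Φ²` and `f_oo t = 1 / (1 - d t Φ t)`, so that
`r / f_oo (1/r) = r - d Φ (1/r)`.
At `t = 1/(2√(d-1))` the quadratic has the double root `1/√(d-1)`; at `t = 1/d` its roots are
`1` and `1/(d-1)`, and monotonicity of `Φ` in `t` selects the latter.
-/

lemma matPow_zero_apply {V : Type*} (M : V → V → ℝ) (x y : V) :
    matPow M 0 x y = if x = y then 1 else 0 := rfl

lemma matPow_succ_apply {V : Type*} (M : V → V → ℝ) (n : ℕ) (x y : V) :
    matPow M (n + 1) x y = ∑' z, M x z * matPow M n z y := rfl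

section GeneratingFunctions

variable {a b : ℕ → ℝ} {t : ℝ}

lemma hasSum_sum_range_mul_mul_pow (ha : Summable fun n => a n * t ^ n)
    (hb : Summable fun n => b n * t ^ n) :
    HasSum (fun n => (∑ j ∈ Finset.range (n + 1), a j * b (n - j)) * t ^ n)
      ((∑' n, a n * t ^ n) * ∑' n, b n * t ^ n) := by
  refine (hasSum_sum_range_mul_of_summable_norm (f := fun n => a n * t ^ n)
    (g := fun n => b n * t ^ n) (summable_norm_iff.2 ha) (summable_norm_iff.2 hb)).congr_fun
    fun n => ?_
  rw [Finset.sum_mul]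
  refine Finset.sum_congr rfl fun j hj => ?_
  rw [← pow_mul_pow_sub t (Nat.lt_succ_iff.1 (Finset.mem_range.1 hj))]
  ring

lemma HasSum.mul_pow_of_succ {B : ℝ} (h : HasSum (fun n => a (n + 1) * t ^ n) B) :
    HasSum (fun n => a n * t ^ n) (a 0 + t * B) := by
  rw [← hasSum_nat_add_iff' 1, Finset.sum_range_one, pow_zero, mul_one, add_sub_cancel_left]
  exact (h.mul_left t).congr_fun fun n => by ring

lemma tsum_mul_pow_eq_of_succ_eq_conv {c : ℝ} (ha0 : a 0 = 0)
    (hrec : ∀ n, a (n + 1) = (if n = 0 then 1 else 0)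
      + c * ∑ j ∈ Finset.range (n + 1), a j * a (n - j))
    (ha : Summable fun n => a n * t ^ n) :
    ∑' n, a n * t ^ n = t + c * t * (∑' n, a n * t ^ n) ^ 2 := by
  have hone : HasSum (fun n : ℕ => (if n = 0 then (1 : ℝ) else 0) * t ^ n) 1 := by
    convert hasSum_single (f := fun n : ℕ => (if n = 0 then (1 : ℝ) else 0) * t ^ n) 0
      (fun n hn => by simp [hn]) using 1
    simp
  have hsucc : HasSum (fun n => a (n + 1) * t ^ n) (1 + c * (∑' n, a n * t ^ n) ^ 2) := by
    rw [sq]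
    exact (hone.add ((hasSum_sum_range_mul_mul_pow ha ha).mul_left c)).congr_fun fun n => by
      rw [hrec]
      ring
  have h := ha.hasSum.unique hsucc.mul_pow_of_succ
  rw [ha0] at h
  linear_combination h

lemma tsum_mul_pow_eq_of_succ_eq_conv_mul {c : ℝ} (hb0 : b 0 = 1)
    (hrec : ∀ n, b (n + 1) = c * ∑ j ∈ Finset.range (n + 1), a j * b (n - j))
    (ha : Summable fun n => a n * t ^ n) (hb : Summable fun n => b n * t ^ n) :
    ∑' n, b n * t ^ n = 1 + c * t * (∑' n, a n * t ^ n) * ∑' n, b n * t ^ n := by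
  have hsucc : HasSum (fun n => b (n + 1) * t ^ n)
      (c * ((∑' n, a n * t ^ n) * ∑' n, b n * t ^ n)) :=
    ((hasSum_sum_range_mul_mul_pow ha hb).mul_left c).congr_fun fun n => by
      rw [hrec]
      ring
  have h := hb.hasSum.unique hsucc.mul_pow_of_succ
  rw [hb0] at h
  linear_combination h

lemma summable_mul_pow_of_mul_le_succ {c : ℝ} (hc : 0 < c) (ht : 0 < t) (ha : ∀ n, 0 ≤ a n)
    (hle : ∀ n, c * a n ≤ b (n + 1)) (hb : Summable fun n => b n * t ^ n) :
    Summable fun n => a n * t ^ n := by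
  have hshift : Summable fun n => (c * t)⁻¹ * (b (n + 1) * t ^ (n + 1)) :=
    ((summable_nat_add_iff 1).2 hb).mul_left _
  refine hshift.of_nonneg_of_le (fun n => mul_nonneg (ha n) (pow_nonneg ht.le n)) fun n => ?_
  calc a n * t ^ n = (c * t)⁻¹ * (c * a n * t ^ (n + 1)) := by
        field_simp
        ring
    _ ≤ (c * t)⁻¹ * (b (n + 1) * t ^ (n + 1)) := by gcongr; exact hle n

end GeneratingFunctions

lemma genFun_mono {V : Type*} {M : V → V → ℝ} {x y : V} {t t' : ℝ}
    (hM : ∀ n, 0 ≤ matPow M n x y) (ht : 0 ≤ t) (htt' : t ≤ t')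
    (hsum : Summable fun n => matPow M n x y * t' ^ n) :
    genFun M t x y ≤ genFun M t' x y := by
  have hle : ∀ n, matPow M n x y * t ^ n ≤ matPow M n x y * t' ^ n := fun n => by
    gcongr
    exact hM n
  exact (hsum.of_nonneg_of_le (fun n => mul_nonneg (hM n) (pow_nonneg ht n)) hle).tsum_le_tsum
    hle hsum

lemma eq_one_div_of_eq_add_sq_of_double_root {s Φ : ℝ} (hs : s ≠ 0)
    (h : Φ = 1 / (2 * s) + s ^ 2 * (1 / (2 * s)) * Φ ^ 2) : Φ = 1 / s := by
  have hsq : (s * Φ - 1) ^ 2 = 0 := by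
    field_simp at h
    linear_combination -h
  rw [eq_div_iff hs]
  linear_combination sq_eq_zero_iff.1 hsq

lemma eq_one_or_eq_one_div_of_eq_add_sq {d Φ : ℝ} (hd : d ≠ 0) (hd1 : d - 1 ≠ 0)
    (h : Φ = 1 / d + (d - 1) * (1 / d) * Φ ^ 2) : Φ = 1 ∨ Φ = 1 / (d - 1) := by
  have hprod : (Φ - 1) * ((d - 1) * Φ - 1) = 0 := by
    field_simp at h
    linear_combination -h
  rcases mul_eq_zero.1 hprod with h1 | h1
  · exact Or.inl (by linear_combination h1)
  · exact Or.inr (by rw [eq_div_iff hd1]; linear_combination h1)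

lemma div_eq_sub_of_eq_one_add_mul {r c Φ U : ℝ} (hr : r ≠ 0)
    (h : U = 1 + c * (1 / r) * Φ * U) : r / U = r - c * Φ := by
  have hU : U * (r - c * Φ) = r := by
    field_simp at h
    linear_combination h
  rw [div_eq_iff (left_ne_zero_of_mul (hU.trans_ne hr))]
  linear_combination -hU

namespace SimpleGraph

variable {V : Type*} (G : SimpleGraph V)

/-- `matPow (G.avoidAdj S) n x y` counts the walks of length `n` from `x` to `y` that stay
outside `S` before their last step; `matPow (G.avoidAdj {y}) n x y` counts first passages. -/
noncomputable def avoidAdj (S : Set V) : V → V → ℝ :=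
  fun x y => if x ∈ S then 0 else adjMat G x y

@[simp]
lemma avoidAdj_empty : G.avoidAdj ∅ = adjMat G := by
  funext x y
  simp [avoidAdj]

variable {S : Set V}

lemma matPow_avoidAdj_succ_of_mem {x : V} (hx : x ∈ S) (n : ℕ) (y : V) :
    matPow (G.avoidAdj S) (n + 1) x y = 0 := by
  simp [matPow_succ_apply, avoidAdj, hx]

variable {G} in
lemma IsTree.mem_support_of_adj {x p z : V} (htree : G.IsTree) (hxp : G.Adj x p)
    (hxz : G.Adj x z) (hzp : z ≠ p) (w : G.Walk z p) : x ∈ w.support := by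
  have hpath : (Walk.cons hxz.symm (Walk.cons hxp Walk.nil) : G.Walk z p).IsPath := by
    simp [Walk.isPath_def, hzp, hxz.ne', hxp.ne]
  have hbypass : w.bypass = Walk.cons hxz.symm (Walk.cons hxp Walk.nil) :=
    (htree.existsUnique_path z p).unique w.bypass_isPath hpath
  exact w.support_bypass_subset_support (by simp [hbypass])

variable [∀ v, Fintype (G.neighborSet v)]

lemma matPow_avoidAdj_succ_of_notMem {x : V} (hx : x ∉ S) (n : ℕ) (y : V) :
    matPow (G.avoidAdj S) (n + 1) x y
      = ∑ z ∈ G.neighborFinset x, matPow (G.avoidAdj S) n z y := by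
  rw [matPow_succ_apply, tsum_eq_sum (s := G.neighborFinset x)]
  · refine Finset.sum_congr rfl fun z hz => ?_
    simp [avoidAdj, adjMat, hx, (G.mem_neighborFinset x z).1 hz]
  · intro z hz
    simp [avoidAdj, adjMat, hx, (G.mem_neighborFinset x z).not.1 hz]

lemma matPow_avoidAdj_nonneg (n : ℕ) (x y : V) : 0 ≤ matPow (G.avoidAdj S) n x y := by
  induction n generalizing x with
  | zero => rw [matPow_zero_apply]; positivity
  | succ n ih =>
    by_cases hx : x ∈ S
    · rw [G.matPow_avoidAdj_succ_of_mem hx]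
    · rw [G.matPow_avoidAdj_succ_of_notMem hx]
      exact Finset.sum_nonneg fun z _ => ih z

/-- Decomposition of a walk according to its first visit to `c` before the last step, if any. -/
lemma matPow_avoidAdj_eq_sum_add (c y : V) (n : ℕ) (z : V) :
    matPow (G.avoidAdj S) n z y
      = ∑ j ∈ Finset.range n,
          matPow (G.avoidAdj (insert c S)) j z c * matPow (G.avoidAdj S) (n - j) c y
        + matPow (G.avoidAdj (insert c S)) n z y := by
  induction n generalizing z with
  | zero => simp [matPow_zero_apply]
  | succ n ih =>
    rw [Finset.sum_range_succ', matPow_zero_apply _ z c, Nat.sub_zero]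
    by_cases hz : z ∈ insert c S
    · simp only [G.matPow_avoidAdj_succ_of_mem hz, zero_mul, Finset.sum_const_zero, zero_add,
        add_zero]
      by_cases hzc : z = c
      · simp [hzc]
      · simp [hzc, G.matPow_avoidAdj_succ_of_mem (hz.resolve_left hzc)]
    · have hzS : z ∉ S := fun h => hz (Set.mem_insert_of_mem c h)
      have hzc : z ≠ c := fun h => hz (h ▸ Set.mem_insert z S)
      simp only [G.matPow_avoidAdj_succ_of_notMem hz, G.matPow_avoidAdj_succ_of_notMem hzS, ih,
        if_neg hzc, zero_mul, add_zero, Finset.sum_add_distrib, Finset.sum_mul,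
        Nat.succ_sub_succ]
      rw [Finset.sum_comm]

lemma matPow_avoidAdj_eq_zero_of_forall_mem_support {x y z : V} (hxS : x ∈ S) (hxy : x ≠ y)
    (hzx : z ≠ x) (hsep : ∀ w : G.Walk z y, x ∈ w.support) (n : ℕ) :
    matPow (G.avoidAdj S) n z y = 0 := by
  induction n generalizing z with
  | zero =>
    have hzy : z ≠ y := by
      rintro rfl
      simpa [hzx.symm] using hsep Walk.nil
    rw [matPow_zero_apply, if_neg hzy]
  | succ n ih =>
    by_cases hzS : z ∈ S
    · exact G.matPow_avoidAdj_succ_of_mem hzS n y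
    rw [G.matPow_avoidAdj_succ_of_notMem hzS]
    refine Finset.sum_eq_zero fun w hw => ?_
    have hzw := (G.mem_neighborFinset z w).1 hw
    by_cases hwx : w = x
    · subst hwx
      cases n with
      | zero => rw [matPow_zero_apply, if_neg hxy]
      | succ m => exact G.matPow_avoidAdj_succ_of_mem hxS m y
    · refine ih hwx fun p => ?_
      simpa [hzx.symm] using hsep (Walk.cons hzw p)

lemma matPow_avoidAdj_insert_of_forall_mem_support {x p z : V} (hxS : x ∈ S) (hxp : x ≠ p)
    (hzx : z ≠ x) (hsep : ∀ w : G.Walk z p, x ∈ w.support) (n : ℕ) (y : V) :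
    matPow (G.avoidAdj (insert p S)) n z y = matPow (G.avoidAdj S) n z y := by
  rw [G.matPow_avoidAdj_eq_sum_add (S := S) p y n z, Finset.sum_eq_zero, zero_add]
  intro j _
  rw [G.matPow_avoidAdj_eq_zero_of_forall_mem_support (Set.mem_insert_of_mem p hxS) hxp hzx hsep,
    zero_mul]

variable {G} {d : ℕ}

/-- A first passage from `x` to its neighbour `p` either steps to `p` at once, or steps to
another neighbour `z`; since `x` separates `z` from `p`, it then first returns to `x` and
passes from `x` to `p` afterwards. -/
lemma IsTree.matPow_avoidAdj_singleton_succ (htree : G.IsTree) {x p : V} (hxp : G.Adj x p)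
    (n : ℕ) :
    matPow (G.avoidAdj {p}) (n + 1) x p
      = (if n = 0 then 1 else 0)
        + ∑ z ∈ (G.neighborFinset x).erase p, ∑ j ∈ Finset.range (n + 1),
            matPow (G.avoidAdj {x}) j z x * matPow (G.avoidAdj {p}) (n - j) x p := by
  have hp : p ∈ G.neighborFinset x := (G.mem_neighborFinset x p).2 hxp
  rw [G.matPow_avoidAdj_succ_of_notMem (by simpa using hxp.ne), ← Finset.add_sum_erase _ _ hp]
  congr 1
  · cases n with
    | zero => simp [matPow_zero_apply]
    | succ m => simp [G.matPow_avoidAdj_succ_of_mem (Set.mem_singleton p)]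
  · refine Finset.sum_congr rfl fun z hz => ?_
    have hzp : z ≠ p := Finset.ne_of_mem_erase hz
    have hxz : G.Adj x z := (G.mem_neighborFinset x z).1 (Finset.mem_of_mem_erase hz)
    have hsep := htree.mem_support_of_adj hxp hxz hzp
    rw [G.matPow_avoidAdj_eq_sum_add x p n z, Finset.sum_range_succ,
      G.matPow_avoidAdj_eq_zero_of_forall_mem_support (Set.mem_insert x _) hxp.ne hxz.ne' hsep,
      Nat.sub_self, matPow_zero_apply _ x p, if_neg hxp.ne, mul_zero, add_zero, add_zero]
    refine Finset.sum_congr rfl fun j _ => ?_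
    rw [Set.pair_comm, G.matPow_avoidAdj_insert_of_forall_mem_support (Set.mem_singleton x)
      hxp.ne hxz.ne' hsep]

lemma IsTree.matPow_avoidAdj_singleton_succ_of_forall (htree : G.IsTree)
    (hreg : ∀ v, G.degree v = d) {x p x' p' : V} (hxp : G.Adj x p) (n : ℕ)
    (h : ∀ j ≤ n, ∀ a b, G.Adj a b →
      matPow (G.avoidAdj {b}) j a b = matPow (G.avoidAdj {p'}) j x' p') :
    matPow (G.avoidAdj {p}) (n + 1) x p
      = (if n = 0 then 1 else 0)
        + ((d : ℝ) - 1) * ∑ j ∈ Finset.range (n + 1),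
            matPow (G.avoidAdj {p'}) j x' p' * matPow (G.avoidAdj {p'}) (n - j) x' p' := by
  have hp : p ∈ G.neighborFinset x := (G.mem_neighborFinset x p).2 hxp
  have hcard : (((G.neighborFinset x).erase p).card : ℝ) + 1 = d := by
    rw [← hreg x, ← card_neighborFinset_eq_degree, ← Finset.card_erase_add_one hp]
    push_cast; rfl
  rw [htree.matPow_avoidAdj_singleton_succ hxp n, ← eq_sub_of_add_eq hcard, ← nsmul_eq_mul,
    ← Finset.sum_const]
  congr 1
  refine Finset.sum_congr rfl fun z hz => Finset.sum_congr rfl fun j hj => ?_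
  have hzx : G.Adj z x := ((G.mem_neighborFinset x z).1 (Finset.mem_of_mem_erase hz)).symm
  have hj : j ≤ n := Nat.lt_succ_iff.1 (Finset.mem_range.1 hj)
  rw [h j hj z x hzx, h (n - j) (Nat.sub_le n j) x p hxp]

lemma IsTree.matPow_avoidAdj_singleton_eq (htree : G.IsTree) (hreg : ∀ v, G.degree v = d)
    (n : ℕ) {x p x' p' : V} (hxp : G.Adj x p) (hx'p' : G.Adj x' p') :
    matPow (G.avoidAdj {p}) n x p = matPow (G.avoidAdj {p'}) n x' p' := by
  induction n using Nat.strong_induction_on generalizing x p with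
  | _ n ih =>
    cases n with
    | zero => simp [matPow_zero_apply, hxp.ne, hx'p'.ne]
    | succ n =>
      have h : ∀ j ≤ n, ∀ a b, G.Adj a b →
          matPow (G.avoidAdj {b}) j a b = matPow (G.avoidAdj {p'}) j x' p' :=
        fun j hj a b hab => ih j (Nat.lt_succ_of_le hj) hab
      rw [htree.matPow_avoidAdj_singleton_succ_of_forall hreg hxp n h,
        htree.matPow_avoidAdj_singleton_succ_of_forall hreg hx'p' n h]

lemma IsTree.matPow_avoidAdj_singleton_succ_eq_conv (htree : G.IsTree)
    (hreg : ∀ v, G.degree v = d) {z o : V} (hzo : G.Adj z o) (n : ℕ) :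
    matPow (G.avoidAdj {o}) (n + 1) z o
      = (if n = 0 then 1 else 0)
        + ((d : ℝ) - 1) * ∑ j ∈ Finset.range (n + 1),
            matPow (G.avoidAdj {o}) j z o * matPow (G.avoidAdj {o}) (n - j) z o :=
  htree.matPow_avoidAdj_singleton_succ_of_forall hreg hzo n
    fun j _ _ _ hab => htree.matPow_avoidAdj_singleton_eq hreg j hab hzo

/-- Decomposition of a return to `o` according to its first step and its first return. -/
lemma IsTree.matPow_adjMat_succ_eq_conv (htree : G.IsTree) (hreg : ∀ v, G.degree v = d)
    {z o : V} (hzo : G.Adj z o) (n : ℕ) :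
    matPow (adjMat G) (n + 1) o o
      = d * ∑ j ∈ Finset.range (n + 1),
          matPow (G.avoidAdj {o}) j z o * matPow (adjMat G) (n - j) o o := by
  rw [← G.avoidAdj_empty, G.matPow_avoidAdj_succ_of_notMem (Set.notMem_empty o), ← hreg o,
    ← card_neighborFinset_eq_degree, ← nsmul_eq_mul, ← Finset.sum_const]
  refine Finset.sum_congr rfl fun w hw => ?_
  have hwo : G.Adj w o := ((G.mem_neighborFinset o w).1 hw).symm
  rw [G.matPow_avoidAdj_eq_sum_add o o n w, Finset.sum_range_succ, Nat.sub_self,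
    matPow_zero_apply _ o o, if_pos rfl, mul_one, LawfulSingleton.insert_empty_eq]
  simp only [htree.matPow_avoidAdj_singleton_eq hreg _ hwo hzo]

lemma IsTree.genFun_identities (htree : G.IsTree) (hreg : ∀ v, G.degree v = d) {z o : V}
    (hzo : G.Adj z o) {t : ℝ} (ht : 0 < t)
    (hsum : Summable fun n => matPow (adjMat G) n o o * t ^ n) :
    Summable (fun n => matPow (G.avoidAdj {o}) n z o * t ^ n) ∧
    genFun (G.avoidAdj {o}) t z o
      = t + ((d : ℝ) - 1) * t * genFun (G.avoidAdj {o}) t z o ^ 2 ∧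
    genFun (adjMat G) t o o
      = 1 + d * t * genFun (G.avoidAdj {o}) t z o * genFun (adjMat G) t o o := by
  have hd : (0 : ℝ) < d := by
    rw [← hreg o]
    exact_mod_cast (G.degree_pos_iff_exists_adj o).2 ⟨z, hzo.symm⟩
  have hu0 : matPow (adjMat G) 0 o o = 1 := if_pos rfl
  have hu : ∀ n, 0 ≤ matPow (adjMat G) n o o := fun n =>
    G.avoidAdj_empty ▸ G.matPow_avoidAdj_nonneg n o o
  have hurec := htree.matPow_adjMat_succ_eq_conv hreg hzo
  -- keep only the term `j = n` of the convolution, where `u 0 = 1`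
  have hle :
      ∀ n, (d : ℝ) * matPow (G.avoidAdj {o}) n z o ≤ matPow (adjMat G) (n + 1) o o := by
    intro n
    rw [hurec]
    gcongr
    calc matPow (G.avoidAdj {o}) n z o
        = matPow (G.avoidAdj {o}) n z o * matPow (adjMat G) (n - n) o o := by
          rw [Nat.sub_self, hu0, mul_one]
      _ ≤ _ := Finset.single_le_sum
          (f := fun j => matPow (G.avoidAdj {o}) j z o * matPow (adjMat G) (n - j) o o)
          (fun j _ => mul_nonneg (G.matPow_avoidAdj_nonneg j z o) (hu _))
          (Finset.self_mem_range_succ n)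
  have hF := summable_mul_pow_of_mul_le_succ hd ht (G.matPow_avoidAdj_nonneg · z o) hle hsum
  exact ⟨hF, tsum_mul_pow_eq_of_succ_eq_conv (if_neg hzo.ne)
    (htree.matPow_avoidAdj_singleton_succ_eq_conv hreg hzo) hF,
    tsum_mul_pow_eq_of_succ_eq_conv_mul hu0 hurec hF hsum⟩

end SimpleGraph

/-- for the `d`-regular tree `T_d` (`d ≥ 3`), the URW localization
threshold is `σ*(T_d) = d/f_{oo}(1/d) = (d−1) − 1/(d−1)` and the `ℓ²`-eigenvector
threshold is `σ_{ℓ²}(T_d) = 2√(d−1)/f_{oo}(1/(2√(d−1))) = √(d−1) − 1/√(d−1)`; in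
particular `σ_{ℓ²}(T_d) < σ*(T_d)`. -/
theorem regular_tree_thresholds
    {V : Type*} (G : SimpleGraph V) [∀ v : V, Fintype (G.neighborSet v)]
    (d : ℕ) (hd : 3 ≤ d)
    (htree : G.IsTree) (hreg : ∀ v : V, G.degree v = d)
    (o : V)
    (hsum1 : Summable (fun n : ℕ => matPow (adjMat G) n o o * (1/(d:ℝ))^n))
    (hsum2 : Summable (fun n : ℕ =>
      matPow (adjMat G) n o o * (1/(2 * Real.sqrt ((d:ℝ) - 1)))^n)) :
    ((d : ℝ) / genFun (adjMat G) (1/(d:ℝ)) o o = ((d : ℝ) - 1) - 1/((d : ℝ) - 1)) ∧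
    ((2 * Real.sqrt ((d:ℝ) - 1)) / genFun (adjMat G) (1/(2 * Real.sqrt ((d:ℝ) - 1))) o o
        = Real.sqrt ((d:ℝ) - 1) - 1/Real.sqrt ((d:ℝ) - 1)) ∧
    ((2 * Real.sqrt ((d:ℝ) - 1)) / genFun (adjMat G) (1/(2 * Real.sqrt ((d:ℝ) - 1))) o o
        < (d : ℝ) / genFun (adjMat G) (1/(d:ℝ)) o o) := by
  obtain ⟨z, hoz⟩ := (G.degree_pos_iff_exists_adj o).1 (by rw [hreg]; omega)
  have hd3 : (3 : ℝ) ≤ d := by exact_mod_cast hd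
  set s := Real.sqrt ((d : ℝ) - 1)
  have hs2 : s ^ 2 = d - 1 := Real.sq_sqrt (by linarith)
  have hs1 : 1 < s := by nlinarith [Real.sqrt_nonneg ((d : ℝ) - 1)]
  have hsd : s < d - 1 := by nlinarith
  have hd1 : (d : ℝ) - 1 ≠ 0 := by linarith
  obtain ⟨-, hΦ₁, hU₁⟩ := htree.genFun_identities hreg hoz.symm (by positivity) hsum1
  obtain ⟨hF₂, hΦ₂, hU₂⟩ := htree.genFun_identities hreg hoz.symm (by positivity) hsum2
  have hΦs : genFun (G.avoidAdj {o}) (1 / (2 * s)) z o = 1 / s :=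
    eq_one_div_of_eq_add_sq_of_double_root (by positivity) (hs2 ▸ hΦ₂)
  have hΦd : genFun (G.avoidAdj {o}) (1 / d) z o = 1 / (d - 1) := by
    -- the root `1` is excluded: `Φ` increases with `t` and `Φ (1 / (2 s)) = 1 / s < 1`
    refine (eq_one_or_eq_one_div_of_eq_add_sq (by positivity) hd1 hΦ₁).resolve_left
      fun h => ?_
    have hmono := genFun_mono (G.matPow_avoidAdj_nonneg · z o) (by positivity)
      (one_div_le_one_div_of_le (by positivity) (by nlinarith)) hF₂
    rw [h, hΦs, le_div_iff₀ (by positivity)] at hmono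
    linarith
  rw [div_eq_sub_of_eq_one_add_mul (by positivity) hU₁,
    div_eq_sub_of_eq_one_add_mul (by positivity) hU₂, hΦd, hΦs]
  have hσd : (d : ℝ) - d * (1 / (d - 1)) = (d - 1) - 1 / (d - 1) := by
    field_simp
    ring
  have hσs : 2 * s - d * (1 / s) = s - 1 / s := by
    field_simp
    linear_combination hs2
  rw [hσd, hσs]
  refine ⟨rfl, rfl, ?_⟩
  have := one_div_lt_one_div_of_lt (by positivity) hsd
  linarith
end

section
/- Rigidity of unimodular Doob walks of energy d: let (G, P, o) be a unimodular random rooted d-regular graph with a reversible-structure Markov kernel P satisfying p_{xy} p_{yx} = 1/d² for every edge (x,y). Then the Mass-Transport Principle identity E[∑_{x∼o} p_{ox}] = E[∑_{x∼o} p_{xo}] forces p_{ox} = 1/d for all x ∼ o, almost surely; i.e., P is the simple random walk. -/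
open MeasureTheory Finset

/-!
Transporting mass `p x y` from `x` to `y` shows that the expected inflow `∑_{y ∼ o} p y o` at
the root is `1`. By the Doob condition the inflow is `∑_{y ∼ o} 1 / d² / p o y`, which by AM-HM
is at least `1` for weights `p o ·` summing to `1`, with equality only at the uniform weights.
An integrand that is at least `1` with integral `1` equals `1` almost surely.
-/

/-- The defect `(1 - c a)² / (c² a)` of the tangent-line bound `2 / c - a ≤ 1 / c² / a`. -/
theorem one_div_sq_div_eq {c a : ℝ} (hc : c ≠ 0) (ha : a ≠ 0) :
    1 / c ^ 2 / a = 2 / c - a + (1 - c * a) ^ 2 / (c ^ 2 * a) := by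
  field_simp
  ring

section AMHM

variable {ι : Type*} {s : Finset ι} {a : ι → ℝ}

theorem sum_one_div_card_sq_div_eq (ha : ∀ i ∈ s, a i ≠ 0) (hsum : ∑ i ∈ s, a i = 1) :
    ∑ i ∈ s, 1 / (#s : ℝ) ^ 2 / a i
      = 1 + ∑ i ∈ s, (1 - #s * a i) ^ 2 / ((#s : ℝ) ^ 2 * a i) := by
  have hs : (#s : ℝ) ≠ 0 := by
    rintro hs
    simp_all
  rw [sum_congr rfl fun i hi => one_div_sq_div_eq hs (ha i hi), sum_add_distrib,
    sum_sub_distrib, sum_const, nsmul_eq_mul, mul_div_cancel₀ _ hs, hsum]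
  ring

theorem one_le_sum_one_div_card_sq_div (ha : ∀ i ∈ s, 0 < a i) (hsum : ∑ i ∈ s, a i = 1) :
    1 ≤ ∑ i ∈ s, 1 / (#s : ℝ) ^ 2 / a i := by
  rw [sum_one_div_card_sq_div_eq (fun i hi => (ha i hi).ne') hsum, le_add_iff_nonneg_right]
  exact sum_nonneg fun i hi => by have := ha i hi; positivity

theorem eq_one_div_card_of_sum_one_div_card_sq_div_eq_one (ha : ∀ i ∈ s, 0 < a i)
    (hsum : ∑ i ∈ s, a i = 1) (heq : ∑ i ∈ s, 1 / (#s : ℝ) ^ 2 / a i = 1) :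
    ∀ i ∈ s, a i = 1 / #s := by
  have hs : (0 : ℝ) < #s := by
    rw [Nat.cast_pos, card_pos]
    exact nonempty_of_sum_ne_zero (by rw [hsum]; exact one_ne_zero)
  rw [sum_one_div_card_sq_div_eq (fun i hi => (ha i hi).ne') hsum, add_eq_left,
    sum_eq_zero_iff_of_nonneg fun i hi => by have := ha i hi; positivity] at heq
  intro i hi
  have hdefect := heq i hi
  rw [div_eq_zero_iff, pow_eq_zero_iff two_ne_zero, sub_eq_zero] at hdefect
  rcases hdefect with h | h
  · rw [eq_div_iff hs.ne', h, mul_comm]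
  · exact absurd h (by have := ha i hi; positivity)

end AMHM

theorem unimodular_doob_walk_rigidity_general
    {X : Type*} [MeasurableSpace X] (μ : Measure X) [IsProbabilityMeasure μ]
    (d : ℕ)
    (N : X → Finset X)
    (hcard : ∀ x, (N x).card = d)
    (hsymm : ∀ x y, y ∈ N x ↔ x ∈ N y)
    (p : X → X → ℝ)
    (hppos : ∀ x y, y ∈ N x → 0 < p x y)
    (hrow : ∀ x, ∑ y ∈ N x, p x y = 1)
    (hdoob : ∀ x y, y ∈ N x → p x y * p y x = 1 / (d : ℝ)^2)
    (hMTP : ∀ f : X → X → ℝ, (∀ x y, 0 ≤ f x y) →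
      ∫ x, (∑ y ∈ N x, f x y) ∂μ = ∫ x, (∑ y ∈ N x, f y x) ∂μ) :
    ∀ᵐ x ∂μ, ∀ y ∈ N x, p x y = 1 / (d : ℝ) := by
  have hinflow : ∀ x, ∑ y ∈ N x, p y x = ∑ y ∈ N x, 1 / (#(N x) : ℝ) ^ 2 / p x y :=
    fun x => sum_congr rfl fun y hy =>
      eq_div_of_mul_eq (hppos x y hy).ne' (by rw [mul_comm, hcard]; exact hdoob x y hy)
  -- `p` is only known to be positive on edges, so transport its positive part.
  have hmass : ∫ _, (1 : ℝ) ∂μ = ∫ x, ∑ y ∈ N x, p y x ∂μ := by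
    convert hMTP (fun x y => max (p x y) 0) (fun _ _ => le_max_right _ _) using 3 with x x
    · rw [← hrow x]
      exact sum_congr rfl fun y hy => (max_eq_left (hppos x y hy).le).symm
    · exact sum_congr rfl fun y hy => (max_eq_left (hppos y x ((hsymm x y).1 hy)).le).symm
  have hintegrable : Integrable (fun x => ∑ y ∈ N x, p y x) μ :=
    Integrable.of_integral_ne_zero (by rw [← hmass]; simp)
  have hinflow_ge : ∀ x, 1 ≤ ∑ y ∈ N x, p y x := fun x => by
    rw [hinflow]
    exact one_le_sum_one_div_card_sq_div (hppos x) (hrow x)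
  have hinflow_eq : (fun _ => (1 : ℝ)) =ᵐ[μ] fun x => ∑ y ∈ N x, p y x :=
    (integral_eq_iff_of_ae_le (integrable_const 1) hintegrable
      (ae_of_all μ hinflow_ge)).1 hmass
  filter_upwards [hinflow_eq] with x hx
  rw [← hcard x]
  exact eq_one_div_card_of_sum_one_div_card_sq_div_eq_one (hppos x) (hrow x)
    (by rw [← hinflow, ← hx])

/-- rigidity of unimodular Doob walks of energy `d`. Let `(X, μ)` be a
probability space carrying a measured `d`-regular graph structure (each point `x` has a
set `N x` of `d` neighbors, symmetrically), and let `p` be a nearest-neighbor Markov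
kernel with `p_{xy} p_{yx} = 1/d²` on every edge (Doob walk of energy `d`). If the
Mass-Transport Principle holds, then almost surely `p_{xy} = 1/d` for every neighbor `y`
of `x`; i.e. `p` is the simple random walk. -/
theorem unimodular_doob_walk_rigidity
    {X : Type*} [MeasurableSpace X] (μ : Measure X) [IsProbabilityMeasure μ]
    (d : ℕ) (hd : 1 ≤ d)
    (N : X → Finset X)
    (hcard : ∀ x, (N x).card = d)
    (hsymm : ∀ x y, y ∈ N x ↔ x ∈ N y)
    (p : X → X → ℝ)
    (hppos : ∀ x y, y ∈ N x → 0 < p x y)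
    (hrow : ∀ x, ∑ y ∈ N x, p x y = 1)
    (hdoob : ∀ x y, y ∈ N x → p x y * p y x = 1 / (d : ℝ)^2)
    (hMTP : ∀ f : X → X → ℝ, (∀ x y, 0 ≤ f x y) →
      ∫ x, (∑ y ∈ N x, f x y) ∂μ = ∫ x, (∑ y ∈ N x, f y x) ∂μ) :
    ∀ᵐ x ∂μ, ∀ y ∈ N x, p x y = 1 / (d : ℝ) :=
  unimodular_doob_walk_rigidity_general μ d N hcard hsymm p hppos hrow hdoob hMTP
end
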